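/- arXiv:2405.13844 — 10 statements merged into one kernel-verified Lean document; each statement's English description precedes it below -/
import Mathlib

section
/- If the transport family T satisfies (ID), (PI) and (DA) with respect to the Markov kernel κ, then T is admissible with respect to κ: there exist a probability space (Ω, 𝒜, ℙ) and, for each x ∈ 𝕏, a measurable map Ỹ_x : Ω → 𝕐 whose law is κ(x), such that for every x, x' ∈ 𝕏, Ỹ_x(ω) = T_{x,x'}(Ỹ_{x'}(ω)) for ℙ-almost every ω. -/
open MeasureTheory ProbabilityTheory

universe v

/-- If the transport family `T` satisfies (ID), (PI) and (DA) with respect to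
the Markov kernel `κ`, then `T` is admissible with respect to `κ`: there exist a probability
space `(Ω, 𝒜, ℙ)` and, for each `x ∈ 𝕏`, a measurable map `Ỹ_x : Ω → 𝕐` whose law is `κ x`,
such that for all `x, x'`, `Ỹ_x = T x x' ∘ Ỹ_{x'}` almost surely. -/
theorem admissible_of_ID_PI_DA
    {𝕏 : Type*} {𝕐 : Type v} [MeasurableSpace 𝕏] [MeasurableSpace 𝕐]
    [StandardBorelSpace 𝕏] [StandardBorelSpace 𝕐]
    (κ : Kernel 𝕏 𝕐) [IsMarkovKernel κ]
    (T : 𝕏 → 𝕏 → 𝕐 → 𝕐)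
    (hT : Measurable fun p : (𝕏 × 𝕏) × 𝕐 => T p.1.1 p.1.2 p.2)
    (hID : ∀ x, ∀ᵐ y ∂(κ x), T x x y = y)
    (hPI : ∀ x x' x'', ∀ᵐ y ∂(κ x), T x'' x' (T x' x y) = T x'' x y)
    (hDA : ∀ x x', (κ x).map (T x' x) = κ x') :
    ∃ (Ω : Type v) (_ : MeasurableSpace Ω) (P : Measure Ω),
      IsProbabilityMeasure P ∧
      ∃ Ytil : 𝕏 → Ω → 𝕐,
        (∀ x, Measurable (Ytil x)) ∧
        (∀ x, P.map (Ytil x) = κ x) ∧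
        (∀ x x', ∀ᵐ ω ∂P, Ytil x ω = T x x' (Ytil x' ω)) := by
  cases isEmpty_or_nonempty 𝕏 with
  | inl h =>
    refine ⟨PUnit, inferInstance, Measure.dirac PUnit.unit, inferInstance,
      fun x => isEmptyElim x, fun x => isEmptyElim x, fun x => isEmptyElim x,
      fun x => isEmptyElim x⟩
  | inr h =>
    obtain ⟨x₀⟩ := h
    have hmeas : ∀ x x', Measurable (T x x') := fun x x' =>
      hT.comp ((measurable_const (a := (x, x'))).prodMk measurable_id)
    refine ⟨𝕐, inferInstance, κ x₀, inferInstance, fun x => T x x₀,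
      fun x => hmeas x x₀, fun x => ?_, fun x x' => ?_⟩
    · simpa using hDA x₀ x
    · filter_upwards [hPI x₀ x' x] with y hy using hy.symm
end

section
/- If the transport family T satisfies (ID), (PI) and (DA) with respect to κ, then there exist a Borel set 𝕐₀ ⊆ 𝕐 and, for each x ∈ 𝕏, Borel maps f_x : 𝕐₀ → 𝕐 and f_x⁺ : 𝕐 → 𝕐₀ with f_x⁺(f_x(e)) = e for all e ∈ 𝕐₀ (in particular each f_x is injective), such that for every x, x' ∈ 𝕏 one has T_{x,x'}(y) = f_x(f_{x'}⁺(y)) for κ(x')-almost every y. -/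
/-!
Fix `x₀`. By (DA) each `κ x` is the image of `κ x₀` under `T x x₀`, and by (PI)
`T x x' ∘ T x' x₀ = T x x₀` holds `κ x₀`-a.e., so one wants `f x = T x x₀` and `f⁺ x` a left
inverse of it. By (ID) and (PI), `T x₀ x` is a `κ x₀`-a.e. left inverse of `T x x₀`, but the
exceptional null set depends on `x`, of which there may be uncountably many. If `𝕐` is countable,
an a.e. identity holds at every atom, and `𝕐₀` is the set of atoms. Otherwise `𝕐₀ = 𝕐`, and
`T x x₀` is redefined on its exceptional set as a Borel embedding into a `κ x`-null set, which
makes it injective without changing it a.e. Injective Borel maps between standard Borel spaces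
are Borel embeddings (Lusin–Souslin), which yields the measurable left inverses `f⁺ x`.
-/

open MeasureTheory ProbabilityTheory Set Function

section InjectiveModification

variable {Y : Type*} [MeasurableSpace Y]

/-- Writing `Y ≃ᵐ Y × Y`, the fibres over the points of `Y` are uncountably many disjoint copies
of `Y`, and only countably many of them can carry positive `ν`-mass. -/
theorem exists_measurableEmbedding_measure_range_eq_zero [StandardBorelSpace Y] [Uncountable Y]
    (ν : Measure Y) [SFinite ν] : ∃ ζ : Y → Y, MeasurableEmbedding ζ ∧ ν (range ζ) = 0 := by
  have : Nonempty Y := not_isEmpty_iff.mp fun _ ↦ not_countable (α := Y) inferInstance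
  let e : Y × Y ≃ᵐ Y := PolishSpace.measurableEquivOfNotCountable not_countable not_countable
  let fibre (t : Y) : Y → Y := fun y ↦ e (t, y)
  have hfibre (t : Y) : MeasurableEmbedding (fibre t) :=
    e.measurableEmbedding.comp (measurableEmbedding_prodMk_left t)
  have hdisj : Pairwise (Disjoint on fun t ↦ range (fibre t)) := by
    intro t t' htt'
    rw [onFun, disjoint_left]
    rintro _ ⟨y, rfl⟩ ⟨y', hy'⟩
    exact htt' (congrArg Prod.fst (e.injective hy')).symm
  have hcount := Measure.countable_meas_pos_of_disjoint_iUnion (μ := ν)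
    (fun t ↦ (hfibre t).measurableSet_range) hdisj
  obtain ⟨t, ht⟩ : ∃ t, ν (range (fibre t)) = 0 := by
    by_contra! hpos
    exact not_countable (countable_univ_iff.mp (hcount.mono fun t _ ↦ (hpos t).bot_lt))
  exact ⟨fibre t, hfibre t, ht⟩

theorem exists_measurableEmbedding_ae_eq_of_ae_leftInverse [StandardBorelSpace Y]
    [Uncountable Y] (μ : Measure Y) [IsFiniteMeasure μ] {g h : Y → Y} (hg : Measurable g)
    (hh : Measurable h)
    (hgh : ∀ᵐ e ∂μ, h (g e) = e) : ∃ F : Y → Y, MeasurableEmbedding F ∧ F =ᵐ[μ] g := by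
  classical
  obtain ⟨ζ, hζ, hζnull⟩ := exists_measurableEmbedding_measure_range_eq_zero (μ.map g)
  set B := {e | h (g e) = e} ∩ g ⁻¹' (range ζ)ᶜ
  have hB : MeasurableSet B :=
    (measurableSet_eq_fun (hh.comp hg) measurable_id).inter (hg hζ.measurableSet_range.compl)
  have hBae : ∀ᵐ e ∂μ, e ∈ B := by
    rw [Measure.map_apply hg hζ.measurableSet_range, measure_eq_zero_iff_ae_notMem] at hζnull
    filter_upwards [hgh, hζnull] with e h₁ h₂ using ⟨h₁, h₂⟩
  have hinj : Injective (B.piecewise g ζ) := by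
    refine (injective_piecewise_iff B).mpr ⟨?_, hζ.injective.injOn, ?_⟩
    · exact fun e he e' he' hee' ↦ he.1.symm.trans ((congrArg h hee').trans he'.1)
    · rintro e he e' - hee'
      exact he.2 ⟨e', hee'.symm⟩
  refine ⟨_, (hg.piecewise hB hζ.measurable).measurableEmbedding hinj, ?_⟩
  filter_upwards [hBae] with e he using piecewise_eq_of_mem B g ζ he

theorem injOn_of_ae_leftInverse [Countable Y] (μ : Measure Y) {g h : Y → Y}
    (hgh : ∀ᵐ e ∂μ, h (g e) = e) : InjOn g {e | μ {e} ≠ 0} := fun e he e' he' hee' ↦ by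
  rw [ae_iff_of_countable] at hgh
  exact (hgh e he).symm.trans ((congrArg h hee').trans (hgh e' he'))

theorem exists_ae_eq_injOn_of_ae_leftInverse [StandardBorelSpace Y] {ι : Type*} (μ : Measure Y)
    [IsFiniteMeasure μ]
    {g h : ι → Y → Y} (hg : ∀ i, Measurable (g i)) (hh : ∀ i, Measurable (h i))
    (hgh : ∀ i, ∀ᵐ e ∂μ, h i (g i e) = e) :
    ∃ Y₀ : Set Y, MeasurableSet Y₀ ∧ (∀ᵐ e ∂μ, e ∈ Y₀) ∧
      ∃ F : ι → Y → Y, ∀ i, Measurable (F i) ∧ InjOn (F i) Y₀ ∧ F i =ᵐ[μ] g i := by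
  by_cases hY : Countable Y
  · refine ⟨{e | μ {e} ≠ 0}, (to_countable _).measurableSet, ae_iff_of_countable.mpr fun _ ↦ id,
      g, fun i ↦ ⟨hg i, injOn_of_ae_leftInverse μ (hgh i), ae_eq_refl _⟩⟩
  · have := not_countable_iff.mp hY
    choose F hF hFg using fun i ↦
      exists_measurableEmbedding_ae_eq_of_ae_leftInverse μ (hg i) (hh i) (hgh i)
    exact ⟨univ, .univ, ae_of_all _ mem_univ, F,
      fun i ↦ ⟨(hF i).measurable, (hF i).injective.injOn, hFg i⟩⟩

end InjectiveModification

theorem exists_measurable_leftInverse_of_injOn {α β : Type*} [MeasurableSpace α]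
    [StandardBorelSpace α] [MeasurableSpace β] [MeasurableSpace.CountablySeparated β]
    {F : α → β} (hF : Measurable F) {s : Set α} (hs : MeasurableSet s) (hinj : InjOn F s)
    [Nonempty s] : ∃ G : β → s, Measurable G ∧ ∀ e (he : e ∈ s), G (F e) = ⟨e, he⟩ := by
  have : StandardBorelSpace s := hs.standardBorel
  have hemb : MeasurableEmbedding (fun e : s ↦ F e) :=
    (hF.comp measurable_subtype_coe).measurableEmbedding (injOn_iff_injective.mp hinj)
  obtain ⟨G, hG, hGF⟩ := hemb.exists_measurable_extend measurable_id fun _ ↦ inferInstance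
  exact ⟨G, hG, fun e he ↦ congrFun hGF ⟨e, he⟩⟩

theorem cocycle_factorization_general
    {𝕏 𝕐 : Type*} [MeasurableSpace 𝕏] [MeasurableSpace 𝕐]
    [StandardBorelSpace 𝕐]
    (κ : Kernel 𝕏 𝕐) [IsMarkovKernel κ]
    (T : 𝕏 → 𝕏 → 𝕐 → 𝕐)
    (hT : Measurable fun p : (𝕏 × 𝕏) × 𝕐 => T p.1.1 p.1.2 p.2)
    (hID : ∀ x, ∀ᵐ y ∂(κ x), T x x y = y)
    (hPI : ∀ x x' x'', ∀ᵐ y ∂(κ x), T x'' x' (T x' x y) = T x'' x y)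
    (hDA : ∀ x x', (κ x).map (T x' x) = κ x') :
    ∃ Y₀ : Set 𝕐, MeasurableSet Y₀ ∧
      ∃ (f : 𝕏 → Y₀ → 𝕐) (finv : 𝕏 → 𝕐 → Y₀),
        (∀ x, Measurable (f x)) ∧
        (∀ x, Measurable (finv x)) ∧
        (∀ x e, finv x (f x e) = e) ∧
        (∀ x, Function.Injective (f x)) ∧
        (∀ x x', ∀ᵐ y ∂(κ x'), T x x' y = f x (finv x' y)) := by
  rcases isEmpty_or_nonempty 𝕏 with h𝕏 | ⟨⟨x₀⟩⟩
  · exact ⟨∅, .empty, isEmptyElim, isEmptyElim, isEmptyElim, isEmptyElim, isEmptyElim,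
      isEmptyElim, fun x ↦ isEmptyElim x⟩
  have hTm (x x' : 𝕏) : Measurable (T x x') := hT.comp (measurable_prodMk_left (x := (x, x')))
  have hleft (x : 𝕏) : ∀ᵐ e ∂(κ x₀), T x₀ x (T x x₀ e) = e := by
    filter_upwards [hPI x₀ x x₀, hID x₀] with e h₁ h₂ using h₁.trans h₂
  obtain ⟨Y₀, hY₀, hae, F, hF⟩ := exists_ae_eq_injOn_of_ae_leftInverse (κ x₀)
    (fun x ↦ hTm x x₀) (fun x ↦ hTm x₀ x) hleft
  have : Nonempty Y₀ := hae.exists.elim fun e he ↦ ⟨⟨e, he⟩⟩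
  choose finv hfinv hfinvF using fun x ↦
    exists_measurable_leftInverse_of_injOn (hF x).1 hY₀ (hF x).2.1
  refine ⟨Y₀, hY₀, fun x e ↦ F x e, finv, fun x ↦ (hF x).1.comp measurable_subtype_coe,
    hfinv, fun x e ↦ hfinvF x e e.2, fun x ↦ injOn_iff_injective.mp (hF x).2.1, fun x x' ↦ ?_⟩
  have hfm : Measurable fun y ↦ F x (finv x' y) :=
    (hF x).1.comp (measurable_subtype_coe.comp (hfinv x'))
  rw [← hDA x₀ x', ae_map_iff (hTm x' x₀).aemeasurable (measurableSet_eq_fun (hTm x x') hfm)]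
  filter_upwards [hPI x₀ x' x, hae, (hF x).2.2, (hF x').2.2] with e hPIe he hFe hFe'
  calc T x x' (T x' x₀ e) = T x x₀ e := hPIe
    _ = F x (finv x' (F x' e)) := by rw [hfinvF x' e he, hFe]
    _ = F x (finv x' (T x' x₀ e)) := by rw [hFe']

/-- **Cocycle Factorization.** If `T` satisfies (ID), (PI) and (DA) with respect
to `κ`, then there are a Borel set `𝕐₀ ⊆ 𝕐` and, for each `x`, Borel maps `f x : 𝕐₀ → 𝕐`
and `f⁺ x : 𝕐 → 𝕐₀` with `f⁺ x ∘ f x = id` (so each `f x` is injective), such that for all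
`x, x'`, `T x x' y = f x (f⁺ x' y)` for `κ x'`-almost every `y`. -/
theorem cocycle_factorization
    {𝕏 𝕐 : Type*} [MeasurableSpace 𝕏] [MeasurableSpace 𝕐]
    [StandardBorelSpace 𝕏] [StandardBorelSpace 𝕐]
    (κ : Kernel 𝕏 𝕐) [IsMarkovKernel κ]
    (T : 𝕏 → 𝕏 → 𝕐 → 𝕐)
    (hT : Measurable fun p : (𝕏 × 𝕏) × 𝕐 => T p.1.1 p.1.2 p.2)
    (hID : ∀ x, ∀ᵐ y ∂(κ x), T x x y = y)
    (hPI : ∀ x x' x'', ∀ᵐ y ∂(κ x), T x'' x' (T x' x y) = T x'' x y)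
    (hDA : ∀ x x', (κ x).map (T x' x) = κ x') :
    ∃ Y₀ : Set 𝕐, MeasurableSet Y₀ ∧
      ∃ (f : 𝕏 → Y₀ → 𝕐) (finv : 𝕏 → 𝕐 → Y₀),
        (∀ x, Measurable (f x)) ∧
        (∀ x, Measurable (finv x)) ∧
        (∀ x e, finv x (f x e) = e) ∧
        (∀ x, Function.Injective (f x)) ∧
        (∀ x x', ∀ᵐ y ∂(κ x'), T x x' y = f x (finv x' y)) :=
  cocycle_factorization_general κ T hT hID hPI hDA
end

section
/- Suppose there exists x₀ ∈ 𝕏 such that every g ∈ 𝔾 whose pushforward of κ(x₀) equals κ(x₀) satisfies g(y) = y for κ(x₀)-almost every y. If f and f̃ are 𝔾-valued coboundary maps whose cocycles T_f and T_{f̃} are both κ-adapted, then for every x, x' ∈ 𝕏, T_f(x,x',y) = T_{f̃}(x,x',y) for κ(x')-almost every y. -/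
open MeasureTheory ProbabilityTheory

/-- **Identifiability of 𝔾-valued cocycles.** Suppose that for some `x₀` every
`g ∈ 𝔾` preserving `κ x₀` is `κ x₀`-a.e. equal to the identity. If `f` and `f̃` are
`𝔾`-valued coboundary maps whose cocycles are both `κ`-adapted, then the two cocycles agree:
for all `x, x'`, `f x ((f x')⁻¹ y) = f̃ x ((f̃ x')⁻¹ y)` for `κ x'`-almost every `y`. -/
theorem cocycle_identifiability
    {𝕏 𝕐 : Type*} [MeasurableSpace 𝕏] [MeasurableSpace 𝕐]
    [StandardBorelSpace 𝕏] [StandardBorelSpace 𝕐]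
    (κ : Kernel 𝕏 𝕐) [IsMarkovKernel κ]
    (𝔾 : Set (𝕐 ≃ᵐ 𝕐))
    (hG_one : MeasurableEquiv.refl 𝕐 ∈ 𝔾)
    (hG_comp : ∀ g ∈ 𝔾, ∀ h ∈ 𝔾, g.trans h ∈ 𝔾)
    (hG_inv : ∀ g ∈ 𝔾, g.symm ∈ 𝔾)
    (x₀ : 𝕏)
    (hAut : ∀ g ∈ 𝔾, (κ x₀).map ⇑g = κ x₀ → ∀ᵐ y ∂(κ x₀), g y = y)
    (f : 𝕏 → 𝕐 ≃ᵐ 𝕐) (hfG : ∀ x, f x ∈ 𝔾)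
    (hf_meas : Measurable fun p : 𝕏 × 𝕐 => f p.1 p.2)
    (hf_inv_meas : Measurable fun p : 𝕏 × 𝕐 => (f p.1).symm p.2)
    (hf_adapted : ∀ x x', (κ x').map (fun y => f x ((f x').symm y)) = κ x)
    (ft : 𝕏 → 𝕐 ≃ᵐ 𝕐) (hftG : ∀ x, ft x ∈ 𝔾)
    (hft_meas : Measurable fun p : 𝕏 × 𝕐 => ft p.1 p.2)
    (hft_inv_meas : Measurable fun p : 𝕏 × 𝕐 => (ft p.1).symm p.2)
    (hft_adapted : ∀ x x', (κ x').map (fun y => ft x ((ft x').symm y)) = κ x) :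
    ∀ x x', ∀ᵐ y ∂(κ x'), f x ((f x').symm y) = ft x ((ft x').symm y) := by
  have key : ∀ x, ∀ᵐ y ∂(κ x₀), f x ((f x₀).symm y) = ft x ((ft x₀).symm y) := by
    intro x
    set g : 𝕐 ≃ᵐ 𝕐 := ((ft x₀).symm.trans (ft x)).trans ((f x).symm.trans (f x₀)) with hg
    have hgG : g ∈ 𝔾 :=
      hG_comp _ (hG_comp _ (hG_inv _ (hftG x₀)) _ (hftG x)) _
        (hG_comp _ (hG_inv _ (hfG x)) _ (hfG x₀))
    have hm1 : Measurable (fun y => ft x ((ft x₀).symm y)) :=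
      (ft x).measurable.comp (ft x₀).symm.measurable
    have hm2 : Measurable (fun y => f x₀ ((f x).symm y)) :=
      (f x₀).measurable.comp (f x).symm.measurable
    have hmap : (κ x₀).map ⇑g = κ x₀ := by
      have h1 : (κ x₀).map (fun y => ft x ((ft x₀).symm y)) = κ x := hft_adapted x x₀
      have h2 : (κ x).map (fun y => f x₀ ((f x).symm y)) = κ x₀ := hf_adapted x₀ x
      calc (κ x₀).map ⇑g
          = ((κ x₀).map (fun y => ft x ((ft x₀).symm y))).map
              (fun y => f x₀ ((f x).symm y)) := by
            rw [Measure.map_map hm2 hm1]; rfl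
        _ = κ x₀ := by rw [h1, h2]
    filter_upwards [hAut g hgG hmap] with y hy
    have hy' : f x₀ ((f x).symm (ft x ((ft x₀).symm y))) = y := hy
    have : (f x).symm (ft x ((ft x₀).symm y)) = (f x₀).symm y := by
      have h := congrArg (⇑(f x₀).symm) hy'
      simpa using h
    calc f x ((f x₀).symm y) = f x ((f x).symm (ft x ((ft x₀).symm y))) := by rw [this]
      _ = ft x ((ft x₀).symm y) := (f x).apply_symm_apply _
  intro x x'
  set φ : 𝕐 ≃ᵐ 𝕐 := (f x₀).symm.trans (f x') with hφdef
  have hφ : κ x' = (κ x₀).map ⇑φ := (hf_adapted x' x₀).symm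
  have hae : ae (κ x') = Filter.map ⇑φ (ae (κ x₀)) := by
    rw [hφ, MeasurableEquiv.map_ae]
  rw [Filter.Eventually, hae, Filter.mem_map]
  show ∀ᵐ z ∂(κ x₀), f x ((f x').symm (φ z)) = ft x ((ft x').symm (φ z))
  filter_upwards [key x, key x'] with z h1 h2
  have e1 : (f x').symm (φ z) = (f x₀).symm z := (f x').symm_apply_apply _
  have e2 : (ft x').symm (φ z) = (ft x₀).symm z := by
    have : φ z = ft x' ((ft x₀).symm z) := h2
    rw [this, MeasurableEquiv.symm_apply_apply]
  rw [e1, e2, h1]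
end

section
/- Let ν be a Borel probability measure on 𝕏 and suppose there is a measurable set A ⊆ 𝕏 with 0 < ν(A) < 1. Let f be a 𝔾-valued coboundary map whose cocycle T_f is κ-adapted, and suppose for some x₀ ∈ 𝕏 there exists g ∈ 𝔾 whose pushforward of κ(x₀) equals κ(x₀) but for which κ(x₀)({y : g(y) ≠ y}) > 0. Then there exists a 𝔾-valued coboundary map f̂ whose cocycle T_{f̂} is κ-adapted and such that for every x ∈ A and every x' ∉ A, κ(x')({y : T_{f̂}(x,x',y) ≠ T_f(x,x',y)}) > 0; in particular the set of pairs (x,x') at which T_{f̂}(x,x',·) and T_f(x,x',·) fail to agree κ(x')-almost everywhere has ν ⊗ ν-measure at least 2·ν(A)·(1 − ν(A)) > 0. -/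
open MeasureTheory ProbabilityTheory

/-- **Non-identifiability from a nontrivial automorphism.** Let `ν` be a Borel
probability measure on `𝕏` and `A` a measurable set with `0 < ν A < 1`. Let `f` be a
`𝔾`-valued coboundary map with `κ`-adapted cocycle, and suppose for some `x₀` there is
`g ∈ 𝔾` preserving `κ x₀` with `κ x₀ {y | g y ≠ y} > 0`. Then there is a `𝔾`-valued
coboundary map `f̂` with `κ`-adapted cocycle such that the cocycles of `f̂` and `f` disagree
on a set of positive `κ x'`-measure whenever `x ∈ A` and `x' ∉ A`; in particular the set of
pairs `(x, x')` where they fail to agree `κ x'`-a.e. has `ν ⊗ ν`-measure at least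
`2 ν(A) (1 − ν(A)) > 0`. -/
theorem cocycle_nonidentifiability
    {𝕏 𝕐 : Type*} [MeasurableSpace 𝕏] [MeasurableSpace 𝕐]
    [StandardBorelSpace 𝕏] [StandardBorelSpace 𝕐]
    (κ : Kernel 𝕏 𝕐) [IsMarkovKernel κ]
    (ν : Measure 𝕏) [IsProbabilityMeasure ν]
    (A : Set 𝕏) (hA : MeasurableSet A) (hA0 : 0 < ν A) (hA1 : ν A < 1)
    (𝔾 : Set (𝕐 ≃ᵐ 𝕐))
    (hG_one : MeasurableEquiv.refl 𝕐 ∈ 𝔾)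
    (hG_comp : ∀ g ∈ 𝔾, ∀ h ∈ 𝔾, g.trans h ∈ 𝔾)
    (hG_inv : ∀ g ∈ 𝔾, g.symm ∈ 𝔾)
    (f : 𝕏 → 𝕐 ≃ᵐ 𝕐) (hfG : ∀ x, f x ∈ 𝔾)
    (hf_meas : Measurable fun p : 𝕏 × 𝕐 => f p.1 p.2)
    (hf_inv_meas : Measurable fun p : 𝕏 × 𝕐 => (f p.1).symm p.2)
    (hf_adapted : ∀ x x', (κ x').map (fun y => f x ((f x').symm y)) = κ x)
    (x₀ : 𝕏) (g : 𝕐 ≃ᵐ 𝕐) (hgG : g ∈ 𝔾)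
    (hg_aut : (κ x₀).map ⇑g = κ x₀)
    (hg_ne : 0 < (κ x₀) {y | g y ≠ y}) :
    ∃ fh : 𝕏 → 𝕐 ≃ᵐ 𝕐,
      (∀ x, fh x ∈ 𝔾) ∧
      (Measurable fun p : 𝕏 × 𝕐 => fh p.1 p.2) ∧
      (Measurable fun p : 𝕏 × 𝕐 => (fh p.1).symm p.2) ∧
      (∀ x x', (κ x').map (fun y => fh x ((fh x').symm y)) = κ x) ∧
      (∀ x ∈ A, ∀ x' ∉ A,
        0 < (κ x') {y | fh x ((fh x').symm y) ≠ f x ((f x').symm y)}) ∧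
      2 * ν A * (1 - ν A) ≤
        (ν.prod ν) {p : 𝕏 × 𝕏 |
          ¬ (∀ᵐ y ∂(κ p.2), fh p.1 ((fh p.2).symm y) = f p.1 ((f p.2).symm y))} ∧
      0 < 2 * ν A * (1 - ν A) := by
  classical
  -- ψ = (f x₀)⁻¹ ∘ g ∘ (f x₀)
  set ψ : 𝕐 ≃ᵐ 𝕐 := (f x₀).trans (g.trans (f x₀).symm) with hψdef
  have hψG : ψ ∈ 𝔾 := hG_comp _ (hfG x₀) _ (hG_comp _ hgG _ (hG_inv _ (hfG x₀)))
  set fh : 𝕏 → 𝕐 ≃ᵐ 𝕐 := fun x => if x ∈ A then ψ.trans (f x) else f x with hfhdef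
  -- the reference measure μ
  set μ : Measure 𝕐 := (κ x₀).map ⇑(f x₀).symm with hμdef
  have hμ : ∀ x, (κ x).map ⇑(f x).symm = μ := by
    intro x
    have h := hf_adapted x₀ x
    have : ((κ x).map (fun y => f x₀ ((f x).symm y))).map ⇑(f x₀).symm = μ := by
      rw [h]
    have hco : (fun y => f x₀ ((f x).symm y)) = ⇑(f x₀) ∘ ⇑(f x).symm := rfl
    rw [hco, Measure.map_map (f x₀).symm.measurable
      ((f x₀).measurable.comp (f x).symm.measurable)] at this
    simpa [Function.comp_def] using this
  have hfwd : ∀ x, μ.map ⇑(f x) = κ x := by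
    intro x
    rw [← hμ x, Measure.map_map (f x).measurable (f x).symm.measurable]
    simp [Function.comp_def]
  have hψμ : μ.map ⇑ψ = μ := by
    have : μ.map ⇑ψ = ((μ.map ⇑(f x₀)).map ⇑g).map ⇑(f x₀).symm := by
      rw [Measure.map_map g.measurable (f x₀).measurable,
        Measure.map_map (f x₀).symm.measurable (g.measurable.comp (f x₀).measurable)]
      rfl
    rw [this, hfwd x₀, hg_aut]
  have hψμ' : μ.map ⇑ψ.symm = μ := by
    conv_lhs => rw [← hψμ]
    rw [Measure.map_map ψ.symm.measurable ψ.measurable]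
    simp
  -- basic properties of fh
  have hfh_apply : ∀ x y, x ∈ A → fh x y = f x (ψ y) := by
    intro x y hx; simp [hfhdef, hx]
  have hfh_apply' : ∀ x y, x ∉ A → fh x y = f x y := by
    intro x y hx; simp [hfhdef, hx]
  have hfh_symm_apply : ∀ x y, x ∈ A → (fh x).symm y = ψ.symm ((f x).symm y) := by
    intro x y hx; simp only [hfhdef, hx, if_true]; rfl
  have hfh_symm_apply' : ∀ x y, x ∉ A → (fh x).symm y = (f x).symm y := by
    intro x y hx; simp [hfhdef, hx]
  -- pushforward facts for fh
  have hfh_symm_map : ∀ x, (κ x).map ⇑(fh x).symm = μ := by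
    intro x
    by_cases hx : x ∈ A
    · have hco : ⇑(fh x).symm = ⇑ψ.symm ∘ ⇑(f x).symm := by
        funext y; exact hfh_symm_apply x y hx
      rw [hco, ← Measure.map_map ψ.symm.measurable (f x).symm.measurable, hμ x, hψμ']
    · have hco : ⇑(fh x).symm = ⇑(f x).symm := by
        funext y; exact hfh_symm_apply' x y hx
      rw [hco, hμ x]
  have hfh_fwd : ∀ x, μ.map ⇑(fh x) = κ x := by
    intro x
    by_cases hx : x ∈ A
    · have hco : ⇑(fh x) = ⇑(f x) ∘ ⇑ψ := by
        funext y; exact hfh_apply x y hx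
      rw [hco, ← Measure.map_map (f x).measurable ψ.measurable, hψμ, hfwd x]
    · have hco : ⇑(fh x) = ⇑(f x) := by
        funext y; exact hfh_apply' x y hx
      rw [hco, hfwd x]
  -- measurability of the nontriviality set
  have hgset : MeasurableSet {y | g y ≠ y} := by
    letI := upgradeStandardBorel 𝕐
    exact (g.measurable.stronglyMeasurable.measurableSet_eq_fun
      measurable_id.stronglyMeasurable).compl
  have hψset : MeasurableSet {y | ψ y ≠ y} := by
    letI := upgradeStandardBorel 𝕐
    exact (ψ.measurable.stronglyMeasurable.measurableSet_eq_fun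
      measurable_id.stronglyMeasurable).compl
  have hψne : 0 < μ {y | ψ y ≠ y} := by
    have hpre : {y | ψ y ≠ y} = ⇑(f x₀) ⁻¹' {y | g y ≠ y} := by
      ext y
      simp only [Set.mem_setOf_eq, Set.mem_preimage, hψdef]
      constructor
      · intro h h'
        exact h (by simp [MeasurableEquiv.trans_apply, h'])
      · intro h h'
        apply h
        have := congrArg (f x₀) h'
        simpa [MeasurableEquiv.trans_apply] using this
    rw [hpre, ← Measure.map_apply (f x₀).measurable hgset, hfwd x₀]
    exact hg_ne
  -- main positivity estimate
  have hpos : ∀ x ∈ A, ∀ x' ∉ A,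
      0 < (κ x') {y | fh x ((fh x').symm y) ≠ f x ((f x').symm y)} := by
    intro x hx x' hx'
    have hset : {y | fh x ((fh x').symm y) ≠ f x ((f x').symm y)}
        = ⇑(f x').symm ⁻¹' {y | ψ y ≠ y} := by
      ext y
      simp only [Set.mem_setOf_eq, Set.mem_preimage,
        hfh_apply x _ hx, hfh_symm_apply' x' _ hx']
      constructor
      · intro h h'
        exact h (by rw [h'])
      · intro h h'
        exact h ((f x).injective h')
    rw [hset, ← Measure.map_apply (f x').symm.measurable hψset, hμ x']
    exact hψne
  have hpos' : ∀ x ∉ A, ∀ x' ∈ A,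
      0 < (κ x') {y | fh x ((fh x').symm y) ≠ f x ((f x').symm y)} := by
    intro x hx x' hx'
    have hψsymmset : MeasurableSet {y | ψ.symm y ≠ y} := by
      letI := upgradeStandardBorel 𝕐
      exact (ψ.symm.measurable.stronglyMeasurable.measurableSet_eq_fun
        measurable_id.stronglyMeasurable).compl
    have hψsymmne : 0 < μ {y | ψ.symm y ≠ y} := by
      have hpre : {y | ψ.symm y ≠ y} = ⇑ψ.symm ⁻¹' {y | ψ y ≠ y} := by
        ext y
        simp only [Set.mem_setOf_eq, Set.mem_preimage, MeasurableEquiv.apply_symm_apply]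
        exact ⟨fun h => fun h' => h h'.symm, fun h => fun h' => h h'.symm⟩
      rw [hpre, ← Measure.map_apply ψ.symm.measurable hψset, hψμ']
      exact hψne
    have hset : {y | fh x ((fh x').symm y) ≠ f x ((f x').symm y)}
        = ⇑(f x').symm ⁻¹' {y | ψ.symm y ≠ y} := by
      ext y
      simp only [Set.mem_setOf_eq, Set.mem_preimage,
        hfh_apply' x _ hx, hfh_symm_apply x' _ hx']
      constructor
      · intro h h'
        exact h (by rw [h'])
      · intro h h'
        exact h ((f x).injective h')
    rw [hset, ← Measure.map_apply (f x').symm.measurable hψsymmset, hμ x']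
    exact hψsymmne
  refine ⟨fh, ?_, ?_, ?_, ?_, hpos, ?_, ?_⟩
  · -- membership in 𝔾
    intro x
    by_cases hx : x ∈ A
    · simp only [hfhdef, hx, if_true]
      exact hG_comp _ hψG _ (hfG x)
    · simp only [hfhdef, hx, if_false]
      exact hfG x
  · -- measurability
    have : (fun p : 𝕏 × 𝕐 => fh p.1 p.2)
        = fun p => if p.1 ∈ A then f p.1 (ψ p.2) else f p.1 p.2 := by
      funext p
      by_cases hx : p.1 ∈ A
      · simp [hfh_apply p.1 p.2 hx, hx]
      · simp [hfh_apply' p.1 p.2 hx, hx]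
    rw [this]
    exact Measurable.ite (hA.preimage measurable_fst)
      (hf_meas.comp (measurable_fst.prodMk (ψ.measurable.comp measurable_snd)))
      hf_meas
  · have : (fun p : 𝕏 × 𝕐 => (fh p.1).symm p.2)
        = fun p => if p.1 ∈ A then ψ.symm ((f p.1).symm p.2) else (f p.1).symm p.2 := by
      funext p
      by_cases hx : p.1 ∈ A
      · simp [hfh_symm_apply p.1 p.2 hx, hx]
      · simp [hfh_symm_apply' p.1 p.2 hx, hx]
    rw [this]
    exact Measurable.ite (hA.preimage measurable_fst)
      (ψ.symm.measurable.comp hf_inv_meas) hf_inv_meas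
  · -- adaptedness
    intro x x'
    have : (fun y => fh x ((fh x').symm y)) = ⇑(fh x) ∘ ⇑(fh x').symm := rfl
    rw [this, ← Measure.map_map (fh x).measurable (fh x').symm.measurable,
      hfh_symm_map x', hfh_fwd x]
  · -- measure lower bound
    have hsub : (A ×ˢ Aᶜ) ∪ (Aᶜ ×ˢ A) ⊆ {p : 𝕏 × 𝕏 |
        ¬ (∀ᵐ y ∂(κ p.2), fh p.1 ((fh p.2).symm y) = f p.1 ((f p.2).symm y))} := by
      rintro ⟨x, x'⟩ (⟨hx, hx'⟩ | ⟨hx, hx'⟩) <;>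
        · simp only [Set.mem_setOf_eq, ae_iff]
          intro h
          first
          | exact absurd h (hpos x hx x' hx').ne'
          | exact absurd h (hpos' x hx x' hx').ne'
    refine le_trans (le_of_eq ?_) ((measure_mono hsub).trans' le_rfl)
    have hdisj : Disjoint (A ×ˢ Aᶜ) ((Aᶜ : Set 𝕏) ×ˢ A) := by
      rw [Set.disjoint_left]
      rintro ⟨x, x'⟩ ⟨hx, _⟩ ⟨hx', _⟩
      exact hx' hx
    rw [measure_union hdisj ((hA.compl).prod hA), Measure.prod_prod, Measure.prod_prod,
      measure_compl hA (measure_ne_top ν A), measure_univ]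
    ring
  · -- positivity of the bound
    rw [pos_iff_ne_zero]
    refine mul_ne_zero (mul_ne_zero (by norm_num) hA0.ne') ?_
    intro h
    rw [tsub_eq_zero_iff_le] at h
    exact absurd h (not_le.mpr hA1)
end

section
/- Let ν be a Borel probability measure on ℝ and let S : ℝ → ℝ be non-decreasing (hence Borel measurable). If the pushforward of ν under S equals ν, then S(y) = y for ν-almost every y. -/
open MeasureTheory Set

private lemma diff_null_of_eq_measure (ν : Measure ℝ) [IsFiniteMeasure ν]
    {U V : Set ℝ} (hV : MeasurableSet V) (h : ν U = ν V)
    (hsub : V \ U = ∅ ∨ U \ V = ∅) : ν (U \ V) = 0 := by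
  rcases hsub with h1 | h2
  · have hVU : V ⊆ U := diff_eq_empty.mp h1
    have := measure_diff hVU hV.nullMeasurableSet (measure_ne_top ν V)
    rw [this, h, tsub_self]
  · rw [h2, measure_empty]

/-- Let `ν` be a Borel probability measure on `ℝ` and `S : ℝ → ℝ`
non-decreasing. If the pushforward of `ν` under `S` equals `ν`, then `S y = y` for
`ν`-almost every `y`. -/
theorem monotone_measurePreserving_ae_eq_id
    (ν : Measure ℝ) [IsProbabilityMeasure ν]
    (S : ℝ → ℝ) (hS : Monotone S)
    (hpush : ν.map S = ν) :
    ∀ᵐ y ∂ν, S y = y := by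
  have hSm : Measurable S := hS.measurable
  have hA : ∀ q : ℚ, ν (S ⁻¹' Ioi (q : ℝ) \ Ioi (q : ℝ)) = 0 := by
    intro q
    have heq : ν (S ⁻¹' Ioi (q : ℝ)) = ν (Ioi (q : ℝ)) := by
      conv_rhs => rw [← hpush]
      rw [Measure.map_apply hSm measurableSet_Ioi]
    refine diff_null_of_eq_measure ν measurableSet_Ioi heq ?_
    by_contra hcon
    push_neg at hcon
    obtain ⟨h1, h2⟩ := hcon
    obtain ⟨z, hz⟩ := h1
    obtain ⟨y, hy⟩ := h2
    -- y : S y > q, y ≤ q ; z : z > q, S z ≤ q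
    simp only [mem_diff, mem_preimage, mem_Ioi, not_lt] at hz hy
    have : y ≤ z := le_trans hy.2 hz.1.le
    exact absurd (hS this) (by linarith [hy.1, hz.2])
  have hB : ∀ q : ℚ, ν (S ⁻¹' Iio (q : ℝ) \ Iio (q : ℝ)) = 0 := by
    intro q
    have heq : ν (S ⁻¹' Iio (q : ℝ)) = ν (Iio (q : ℝ)) := by
      conv_rhs => rw [← hpush]
      rw [Measure.map_apply hSm measurableSet_Iio]
    refine diff_null_of_eq_measure ν measurableSet_Iio heq ?_
    by_contra hcon
    push_neg at hcon
    obtain ⟨h1, h2⟩ := hcon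
    obtain ⟨z, hz⟩ := h1
    obtain ⟨y, hy⟩ := h2
    simp only [mem_diff, mem_preimage, mem_Iio, not_lt] at hz hy
    have : z ≤ y := le_trans hz.1.le hy.2
    exact absurd (hS this) (by linarith [hy.1, hz.2])
  have hAall : ∀ᵐ y ∂ν, ∀ q : ℚ, y ∉ S ⁻¹' Ioi (q : ℝ) \ Ioi (q : ℝ) := by
    refine (ae_all_iff).mpr fun q => ?_
    rw [ae_iff]
    convert hA q using 2
    ext a; simp
  have hBall : ∀ᵐ y ∂ν, ∀ q : ℚ, y ∉ S ⁻¹' Iio (q : ℝ) \ Iio (q : ℝ) := by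
    refine (ae_all_iff).mpr fun q => ?_
    rw [ae_iff]
    convert hB q using 2
    ext a; simp
  filter_upwards [hAall, hBall] with y hy1 hy2
  by_contra hne
  rcases lt_or_gt_of_ne hne with h | h
  · -- S y < y
    obtain ⟨q, hq1, hq2⟩ := exists_rat_btwn h
    exact hy2 q ⟨hq1, not_lt.mpr hq2.le⟩
  · -- S y > y
    obtain ⟨q, hq1, hq2⟩ := exists_rat_btwn h
    exact hy1 q ⟨hq2, not_lt.mpr hq1.le⟩
end

section
/- Let P be a Borel probability measure on ℝ^p and let T : ℝ^p → ℝ^p be Borel measurable and triangularly monotone in the following sense: for each j ∈ {1,…,p}, the j-th coordinate T_j(y) depends only on (y_1,…,y_j) (i.e. T_j(y) = T_j(y') whenever y_i = y'_i for all i ≤ j), and for each fixed (y_1,…,y_{j−1}) the map y_j ↦ T_j(y) is non-decreasing. If the pushforward of P under T equals P, then T(y) = y for P-almost every y. -/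
open MeasureTheory

/-- Let `P` be a Borel probability measure on `ℝ^p` and `T : ℝ^p → ℝ^p`
Borel measurable and triangularly monotone: for each `j`, the `j`-th coordinate `T y j`
depends only on `(y_1, …, y_j)` and, with the coordinates before `j` fixed, is
non-decreasing in `y j`. If `P.map T = P`, then `T y = y` for `P`-almost every `y`. -/
theorem triangular_monotone_measurePreserving_ae_eq_id {p : ℕ}
    (P : Measure (Fin p → ℝ)) [IsProbabilityMeasure P]
    (T : (Fin p → ℝ) → (Fin p → ℝ)) (hTmeas : Measurable T)
    (hdep : ∀ (j : Fin p) (y y' : Fin p → ℝ), (∀ i ≤ j, y i = y' i) → T y j = T y' j)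
    (hmono : ∀ (j : Fin p) (y y' : Fin p → ℝ),
      (∀ i < j, y i = y' i) → y j ≤ y' j → T y j ≤ T y' j)
    (hpush : P.map T = P) :
    ∀ᵐ y ∂P, T y = y := by
  have step : ∀ j : Fin p, (∀ᵐ y ∂P, ∀ i < j, T y i = y i) →
      ∀ᵐ y ∂P, T y j = y j := by
    intro j H
    have key : ∀ q : ℚ, P {y | T y j ≤ (q:ℝ) ∧ (q:ℝ) < y j} = 0 ∧
        P {y | y j ≤ (q:ℝ) ∧ (q:ℝ) < T y j} = 0 := by
      intro q
      set G : Set (Fin p → ℝ) :=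
        {y | ∀ r : ℚ, q < r → (q:ℝ) < T (Function.update y j (r:ℝ)) j} with hGdef
      have hupd : ∀ r : ℝ, Measurable (fun y : Fin p → ℝ => Function.update y j r) := by
        intro r
        refine measurable_pi_lambda _ fun i => ?_
        by_cases h : i = j
        · subst h; simp only [Function.update_self]; exact measurable_const
        · simp only [Function.update_of_ne h]; exact measurable_pi_apply i
      have hGmeas : MeasurableSet G := by
        have : G = ⋂ r ∈ {r : ℚ | q < r},
            {y | (q:ℝ) < T (Function.update y j (r:ℝ)) j} := by
          ext y; simp [hGdef]
        rw [this]
        exact MeasurableSet.biInter (Set.to_countable _) fun r _ =>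
          measurableSet_lt measurable_const
            ((measurable_pi_apply j).comp (hTmeas.comp (hupd r)))
      -- the key measure identity, for sets depending only on coordinates < j
      have fact1 : ∀ C : Set (Fin p → ℝ), MeasurableSet C →
          (∀ y y' : Fin p → ℝ, (∀ i < j, y i = y' i) → (y ∈ C ↔ y' ∈ C)) →
          P (C ∩ {y | T y j ≤ (q:ℝ)}) = P (C ∩ {y | y j ≤ (q:ℝ)}) := by
        intro C hC hCinv
        have hB : MeasurableSet (C ∩ {y | y j ≤ (q:ℝ)}) :=
          hC.inter (measurableSet_le (measurable_pi_apply j) measurable_const)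
        have h1 : P (T ⁻¹' (C ∩ {y | y j ≤ (q:ℝ)})) = P (C ∩ {y | y j ≤ (q:ℝ)}) := by
          rw [← Measure.map_apply hTmeas hB, hpush]
        have h2 : P (T ⁻¹' (C ∩ {y | y j ≤ (q:ℝ)})) = P (C ∩ {y | T y j ≤ (q:ℝ)}) := by
          apply measure_congr
          rw [Filter.eventuallyEq_set]
          filter_upwards [H] with y hy
          have hmem : T y ∈ C ↔ y ∈ C := hCinv (T y) y fun i hi => hy i hi
          simp only [Set.mem_preimage, Set.mem_inter_iff, Set.mem_setOf_eq]
          tauto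
        rw [← h2, h1]
      -- invariance of G
      have hGinv : ∀ y y' : Fin p → ℝ, (∀ i < j, y i = y' i) → (y ∈ G ↔ y' ∈ G) := by
        intro y y' hyy'
        have heq : ∀ r : ℚ, T (Function.update y j (r:ℝ)) j
            = T (Function.update y' j (r:ℝ)) j := by
          intro r
          apply hdep
          intro i hi
          rcases lt_or_eq_of_le hi with h | h
          · rw [Function.update_of_ne (ne_of_lt h), Function.update_of_ne (ne_of_lt h)]
            exact hyy' i h
          · subst h; simp
        constructor <;> intro hy r hr
        · rw [← heq r]; exact hy r hr
        · rw [heq r]; exact hy r hr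
      have eqG := fact1 G hGmeas hGinv
      have eqGc := fact1 Gᶜ hGmeas.compl fun y y' h => not_congr (hGinv y y' h)
      -- subset 1 : on G, {T_j ≤ q} ⊆ {y_j ≤ q}
      have sub1 : G ∩ {y | T y j ≤ (q:ℝ)} ⊆ G ∩ {y | y j ≤ (q:ℝ)} := by
        rintro y ⟨hyG, hyT⟩
        refine ⟨hyG, ?_⟩
        simp only [Set.mem_setOf_eq]
        by_contra hgt
        push_neg at hgt
        obtain ⟨r, hqr, hry⟩ := exists_rat_btwn hgt
        have h1 : (q:ℝ) < T (Function.update y j (r:ℝ)) j := hyG r (by exact_mod_cast hqr)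
        have h2 : T (Function.update y j (r:ℝ)) j ≤ T y j := by
          apply hmono
          · intro i hi; rw [Function.update_of_ne (ne_of_lt hi)]
          · simpa using le_of_lt hry
        have hyT' : T y j ≤ (q:ℝ) := hyT
        linarith
      -- subset 2 : on Gᶜ, {y_j ≤ q} ⊆ {T_j ≤ q}
      have sub2 : Gᶜ ∩ {y | y j ≤ (q:ℝ)} ⊆ Gᶜ ∩ {y | T y j ≤ (q:ℝ)} := by
        rintro y ⟨hyG, hyle⟩
        refine ⟨hyG, ?_⟩
        simp only [hGdef, Set.mem_compl_iff, Set.mem_setOf_eq, not_forall] at hyG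
        obtain ⟨r, hqr, hTr⟩ := hyG
        push_neg at hTr
        have h2 : T y j ≤ T (Function.update y j (r:ℝ)) j := by
          apply hmono
          · intro i hi; rw [Function.update_of_ne (ne_of_lt hi)]
          · simp only [Function.update_self]
            calc y j ≤ (q:ℝ) := hyle
            _ ≤ (r:ℝ) := by exact_mod_cast le_of_lt hqr
        show T y j ≤ (q:ℝ)
        linarith
      -- P(B \ A) = 0 when A ⊆ B, P A = P B
      have nulldiff : ∀ A B : Set (Fin p → ℝ), MeasurableSet A → A ⊆ B → P A = P B →
          P (B \ A) = 0 := by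
        intro A B hA hAB hPeq
        rw [measure_diff hAB hA.nullMeasurableSet (measure_ne_top P A), ← hPeq, tsub_self]
      have hTle : MeasurableSet {y | T y j ≤ (q:ℝ)} :=
        measurableSet_le ((measurable_pi_apply j).comp hTmeas) measurable_const
      have hyle : MeasurableSet {y : Fin p → ℝ | y j ≤ (q:ℝ)} :=
        measurableSet_le (measurable_pi_apply j) measurable_const
      constructor
      · -- {T_j ≤ q < y_j} ⊆ (Gᶜ ∩ {T_j ≤ q}) \ (Gᶜ ∩ {y_j ≤ q})
        have hnull : P ((Gᶜ ∩ {y | T y j ≤ (q:ℝ)}) \ (Gᶜ ∩ {y | y j ≤ (q:ℝ)})) = 0 :=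
          nulldiff _ _ (hGmeas.compl.inter hyle) sub2 eqGc.symm
        refine measure_mono_null ?_ hnull
        rintro y ⟨hyT, hygt⟩
        have hyGc : y ∈ Gᶜ := by
          simp only [hGdef, Set.mem_compl_iff, Set.mem_setOf_eq, not_forall]
          obtain ⟨r, hqr, hry⟩ := exists_rat_btwn hygt
          refine ⟨r, by exact_mod_cast hqr, ?_⟩
          push_neg
          have h2 : T (Function.update y j (r:ℝ)) j ≤ T y j := by
            apply hmono
            · intro i hi; rw [Function.update_of_ne (ne_of_lt hi)]
            · simpa using le_of_lt hry
          linarith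
        exact ⟨⟨hyGc, hyT⟩, fun hmem => absurd hmem.2 (not_le.2 hygt)⟩
      · -- {y_j ≤ q < T_j} ⊆ (G ∩ {y_j ≤ q}) \ (G ∩ {T_j ≤ q})
        have hnull : P ((G ∩ {y | y j ≤ (q:ℝ)}) \ (G ∩ {y | T y j ≤ (q:ℝ)})) = 0 :=
          nulldiff _ _ (hGmeas.inter hTle) sub1 eqG
        refine measure_mono_null ?_ hnull
        rintro y ⟨hyle', hyTgt⟩
        have hyG : y ∈ G := by
          intro r hqr
          have h2 : T y j ≤ T (Function.update y j (r:ℝ)) j := by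
            apply hmono
            · intro i hi; rw [Function.update_of_ne (ne_of_lt hi)]
            · simp only [Function.update_self]
              calc y j ≤ (q:ℝ) := hyle'
              _ ≤ (r:ℝ) := by exact_mod_cast le_of_lt hqr
          linarith
        exact ⟨⟨hyG, hyle'⟩, fun hmem => absurd hmem.2 (not_le.2 hyTgt)⟩
    -- combine over all rationals
    have hae : ∀ᵐ y ∂P, ∀ q : ℚ,
        ¬(T y j ≤ (q:ℝ) ∧ (q:ℝ) < y j) ∧ ¬(y j ≤ (q:ℝ) ∧ (q:ℝ) < T y j) := by
      rw [ae_all_iff]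
      intro q
      obtain ⟨h1, h2⟩ := key q
      have h1' : ∀ᵐ y ∂P, ¬(T y j ≤ (q:ℝ) ∧ (q:ℝ) < y j) :=
        (measure_eq_zero_iff_ae_notMem).1 h1
      have h2' : ∀ᵐ y ∂P, ¬(y j ≤ (q:ℝ) ∧ (q:ℝ) < T y j) :=
        (measure_eq_zero_iff_ae_notMem).1 h2
      filter_upwards [h1', h2'] with y hy1 hy2
      exact ⟨hy1, hy2⟩
    filter_upwards [hae] with y hy
    by_contra hne
    rcases lt_or_gt_of_ne hne with h | h
    · obtain ⟨r, hr1, hr2⟩ := exists_rat_btwn h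
      exact (hy r).1 ⟨le_of_lt hr1, hr2⟩
    · obtain ⟨r, hr1, hr2⟩ := exists_rat_btwn h
      exact (hy r).2 ⟨le_of_lt hr1, hr2⟩
  -- induction over coordinates
  have main : ∀ n : ℕ, ∀ᵐ y ∂P, ∀ i : Fin p, (i:ℕ) < n → T y i = y i := by
    intro n
    induction n with
    | zero => filter_upwards with y i hi; omega
    | succ n ih =>
      by_cases hn : n < p
      · have hj := step ⟨n, hn⟩ (by
          filter_upwards [ih] with y hy i hi
          exact hy i hi)
        filter_upwards [ih, hj] with y hy hyn i hi
        rcases Nat.lt_succ_iff_lt_or_eq.1 hi with h | h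
        · exact hy i h
        · have : i = ⟨n, hn⟩ := Fin.ext h
          rw [this]; exact hyn
      · filter_upwards [ih] with y hy i hi
        exact hy i (by omega)
  filter_upwards [main p] with y hy
  funext i
  exact hy i i.isLt
end

section
/- Let κ be a Markov kernel from 𝕏 to ℝ^p. If f and f̃ are 𝔾_TMI-valued coboundary maps whose cocycles T_f(x,x',y) := f_x(f_{x'}⁻¹(y)) and T_{f̃}(x,x',y) := f̃_x(f̃_{x'}⁻¹(y)) are both κ-adapted — i.e. for every x, x' ∈ 𝕏 the pushforward of κ(x') under T_f(x,x',·), respectively under T_{f̃}(x,x',·), equals κ(x) — then for every x, x' ∈ 𝕏, T_f(x,x',y) = T_{f̃}(x,x',y) for κ(x')-almost every y. No absolute continuity of the measures κ(x) is assumed. -/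
open MeasureTheory ProbabilityTheory

/-- A map `g : ℝ^p → ℝ^p` is triangular monotone increasing (TMI): each coordinate
`g y j` depends only on `(y_1, …, y_j)` and, with earlier coordinates fixed, is strictly
increasing in `y j`. -/
def IsTMI {p : ℕ} (g : (Fin p → ℝ) → (Fin p → ℝ)) : Prop :=
  (∀ (j : Fin p) (y y' : Fin p → ℝ), (∀ i ≤ j, y i = y' i) → g y j = g y' j) ∧
  (∀ (j : Fin p) (y y' : Fin p → ℝ), (∀ i < j, y i = y' i) → y j < y' j → g y j < g y' j)

lemma IsTMI.comp {p : ℕ} {f g : (Fin p → ℝ) → (Fin p → ℝ)} (hf : IsTMI f) (hg : IsTMI g) :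
    IsTMI (fun y => f (g y)) := by
  constructor
  · intro j y y' h
    exact hf.1 j (g y) (g y') fun i hi => hg.1 i y y' fun k hk => h k (hk.trans hi)
  · intro j y y' h hlt
    exact hf.2 j (g y) (g y')
      (fun i hi => hg.1 i y y' fun k hk => h k (lt_of_le_of_lt hk hi))
      (hg.2 j y y' h hlt)

/-- Key step: for a TMI map `φ` preserving a finite measure `ν`, if its first `j` coordinates
are a.e. the identity, then so is coordinate `j`. -/
lemma tmi_step {p : ℕ} (ν : Measure (Fin p → ℝ)) [IsFiniteMeasure ν]
    (φ : (Fin p → ℝ) → (Fin p → ℝ)) (hφ : Measurable φ) (htmi : IsTMI φ)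
    (hmap : ν.map φ = ν) (j : Fin p)
    (H : ∀ᵐ z ∂ν, ∀ i < j, φ z i = z i) :
    ∀ᵐ z ∂ν, φ z j = z j := by
  have key : ∀ t : ℚ, ∀ᵐ z ∂ν, (φ z j ≤ (t : ℝ) ↔ z j ≤ (t : ℝ)) := by
    intro t
    set c : (Fin p → ℝ) → ℝ := fun z => φ (Function.update z j (t : ℝ)) j with hc
    have hupd_meas : Measurable fun z : Fin p → ℝ => Function.update z j (t : ℝ) := by
      refine measurable_pi_lambda _ fun i => ?_
      simp only [Function.update_apply]
      by_cases hij : i = j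
      · simp [hij]
      · simpa [hij] using measurable_pi_apply i
    have hcmeas : Measurable c := (measurable_pi_apply j).comp (hφ.comp hupd_meas)
    set W : Set (Fin p → ℝ) := {z | c z ≤ (t : ℝ)} with hWdef
    have hW : MeasurableSet W := measurableSet_le hcmeas measurable_const
    have hupd_eq : ∀ z : Fin p → ℝ, ∀ i < j, z i = Function.update z j (t : ℝ) i := by
      intro z i hij
      exact (Function.update_of_ne (Fin.ne_of_lt hij) _ _).symm
    -- (1): on W, z j ≤ t implies φ z j ≤ t
    have h1 : ∀ z, z ∈ W → z j ≤ (t : ℝ) → φ z j ≤ (t : ℝ) := by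
      intro z hzW hzj
      rcases eq_or_lt_of_le hzj with h | h
      · have e : Function.update z j (t : ℝ) = z := by
          rw [← h]; exact Function.update_eq_self j z
        have : c z = φ z j := by simp only [hc, e]
        rw [← this]; exact hzW
      · have hlt := htmi.2 j z (Function.update z j (t : ℝ)) (hupd_eq z)
          (by simpa using h)
        exact le_trans hlt.le hzW
    -- (2): off W, φ z j ≤ t implies z j ≤ t
    have h2 : ∀ z, z ∉ W → φ z j ≤ (t : ℝ) → z j ≤ (t : ℝ) := by
      intro z hzW hφz
      by_contra hcon
      push_neg at hcon
      have hlt := htmi.2 j (Function.update z j (t : ℝ)) z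
        (fun i hij => (hupd_eq z i hij).symm) (by simpa using hcon)
      have hW' : (t : ℝ) < c z := not_le.1 hzW
      linarith
    -- W depends only on coordinates < j
    have hWdep : ∀ z z' : Fin p → ℝ, (∀ i < j, z i = z' i) → (z ∈ W ↔ z' ∈ W) := by
      intro z z' h
      have : c z = c z' := by
        apply htmi.1 j
        intro i hi
        rcases lt_or_eq_of_le hi with hi' | hi'
        · rw [Function.update_of_ne (Fin.ne_of_lt hi'), Function.update_of_ne (Fin.ne_of_lt hi')]
          exact h i hi'
        · subst hi'; simp
      simp only [hWdef, Set.mem_setOf_eq, this]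
    -- The measure identity for sets determined by coordinates < j
    have hA : MeasurableSet {z : Fin p → ℝ | z j ≤ (t : ℝ)} :=
      measurableSet_le (measurable_pi_apply j) measurable_const
    have hB : MeasurableSet {z : Fin p → ℝ | φ z j ≤ (t : ℝ)} :=
      measurableSet_le ((measurable_pi_apply j).comp hφ) measurable_const
    have meq : ∀ V : Set (Fin p → ℝ), MeasurableSet V →
        (∀ z z' : Fin p → ℝ, (∀ i < j, z i = z' i) → (z ∈ V ↔ z' ∈ V)) →
        ν (V ∩ {z | φ z j ≤ (t : ℝ)}) = ν (V ∩ {z | z j ≤ (t : ℝ)}) := by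
      intro V hV hVdep
      have hset : MeasurableSet (V ∩ {z : Fin p → ℝ | z j ≤ (t : ℝ)}) := hV.inter hA
      have h1' : ν (φ ⁻¹' (V ∩ {z | z j ≤ (t : ℝ)})) = ν (V ∩ {z | z j ≤ (t : ℝ)}) := by
        conv_rhs => rw [← hmap]
        rw [Measure.map_apply hφ hset]
      have haeeq : ((V ∩ {z | φ z j ≤ (t : ℝ)} : Set (Fin p → ℝ))) =ᵐ[ν]
          ((φ ⁻¹' (V ∩ {z | z j ≤ (t : ℝ)}) : Set (Fin p → ℝ))) := by
        rw [Filter.eventuallyEq_set]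
        filter_upwards [H] with z hz
        simp only [Set.mem_inter_iff, Set.mem_preimage, Set.mem_setOf_eq]
        have hmem : φ z ∈ V ↔ z ∈ V := hVdep (φ z) z fun i hij => hz i hij
        tauto
      rw [measure_congr haeeq, h1']
    -- The two null difference sets
    have n1 : ν ((W ∩ {z | φ z j ≤ (t : ℝ)}) \ (W ∩ {z | z j ≤ (t : ℝ)})) = 0 := by
      have hsub : W ∩ {z | z j ≤ (t : ℝ)} ⊆ W ∩ {z | φ z j ≤ (t : ℝ)} :=
        fun z hz => ⟨hz.1, h1 z hz.1 hz.2⟩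
      have heq := meq W hW hWdep
      rw [measure_diff hsub (hW.inter hA).nullMeasurableSet (measure_ne_top ν _), heq,
        tsub_self]
    have n2 : ν ((Wᶜ ∩ {z | z j ≤ (t : ℝ)}) \ (Wᶜ ∩ {z | φ z j ≤ (t : ℝ)})) = 0 := by
      have hsub : Wᶜ ∩ {z | φ z j ≤ (t : ℝ)} ⊆ Wᶜ ∩ {z | z j ≤ (t : ℝ)} :=
        fun z hz => ⟨hz.1, h2 z hz.1 hz.2⟩
      have heq := meq Wᶜ hW.compl
        (fun z z' h => by
          simp only [Set.mem_compl_iff]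
          exact not_congr (hWdep z z' h))
      rw [measure_diff hsub (hW.compl.inter hB).nullMeasurableSet (measure_ne_top ν _), heq,
        tsub_self]
    have hD1 : ∀ᵐ z ∂ν, z ∉ (W ∩ {z | φ z j ≤ (t : ℝ)}) \ (W ∩ {z | z j ≤ (t : ℝ)}) :=
      measure_eq_zero_iff_ae_notMem.1 n1
    have hD2 : ∀ᵐ z ∂ν, z ∉ (Wᶜ ∩ {z | z j ≤ (t : ℝ)}) \ (Wᶜ ∩ {z | φ z j ≤ (t : ℝ)}) :=
      measure_eq_zero_iff_ae_notMem.1 n2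
    filter_upwards [hD1, hD2] with z hz1 hz2
    constructor
    · intro hφz
      by_cases hzW : z ∈ W
      · by_contra hcon
        exact hz1 ⟨⟨hzW, hφz⟩, fun hmem => hcon hmem.2⟩
      · exact h2 z hzW hφz
    · intro hzj
      by_cases hzW : z ∈ W
      · exact h1 z hzW hzj
      · by_contra hcon
        exact hz2 ⟨⟨hzW, hzj⟩, fun hmem => hcon hmem.2⟩
  have key' := ae_all_iff.2 key
  filter_upwards [key'] with z hz
  by_contra hne
  rcases lt_or_gt_of_ne hne with hlt | hlt
  · obtain ⟨q, hq1, hq2⟩ := exists_rat_btwn hlt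
    exact absurd ((hz q).1 hq1.le) (not_le.2 hq2)
  · obtain ⟨q, hq1, hq2⟩ := exists_rat_btwn hlt
    exact absurd ((hz q).2 hq1.le) (not_le.2 hq2)

/-- A measurable TMI map preserving a finite measure on `ℝ^p` is a.e. the identity. -/
lemma tmi_fixed_ae {p : ℕ} (ν : Measure (Fin p → ℝ)) [IsFiniteMeasure ν]
    (φ : (Fin p → ℝ) → (Fin p → ℝ)) (hφ : Measurable φ) (htmi : IsTMI φ)
    (hmap : ν.map φ = ν) :
    ∀ᵐ z ∂ν, φ z = z := by
  have main : ∀ n : ℕ, ∀ᵐ z ∂ν, ∀ i : Fin p, (i : ℕ) < n → φ z i = z i := by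
    intro n
    induction n with
    | zero =>
      filter_upwards with z i hi
      exact absurd hi (Nat.not_lt_zero _)
    | succ n ih =>
      by_cases hn : n < p
      · have Hj : ∀ᵐ z ∂ν, ∀ i < (⟨n, hn⟩ : Fin p), φ z i = z i := by
          filter_upwards [ih] with z hz i hij
          exact hz i (by simpa [Fin.lt_def] using hij)
        have hstep := tmi_step ν φ hφ htmi hmap ⟨n, hn⟩ Hj
        filter_upwards [ih, hstep] with z h1 h2 i hi
        rcases Nat.lt_succ_iff_lt_or_eq.1 hi with h | h
        · exact h1 i h
        · have : i = (⟨n, hn⟩ : Fin p) := Fin.ext h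
          rw [this]; exact h2
      · filter_upwards [ih] with z h i _
        have := i.isLt
        exact h i (by omega)
  filter_upwards [main p] with z hz
  funext i
  exact hz i i.isLt

/-- **Identifiability under TMI maps.** If `f` and `f̃` are `𝔾_TMI`-valued
coboundary maps (TMI bijections with TMI inverses, jointly measurable in both directions)
whose cocycles `T_f (x,x',y) = f x ((f x')⁻¹ y)` and `T_f̃` are both `κ`-adapted, then
for every `x, x'` the two cocycles agree `κ x'`-almost everywhere. No absolute continuity
of the measures `κ x` is assumed. -/
theorem tmi_cocycle_identifiability
    {𝕏 : Type*} [MeasurableSpace 𝕏] [StandardBorelSpace 𝕏] {p : ℕ}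
    (κ : Kernel 𝕏 (Fin p → ℝ)) [IsMarkovKernel κ]
    (f finv : 𝕏 → (Fin p → ℝ) → (Fin p → ℝ))
    (hf_linv : ∀ x, Function.LeftInverse (finv x) (f x))
    (hf_rinv : ∀ x, Function.RightInverse (finv x) (f x))
    (hf_tmi : ∀ x, IsTMI (f x)) (hfinv_tmi : ∀ x, IsTMI (finv x))
    (hf_meas : Measurable fun q : 𝕏 × (Fin p → ℝ) => f q.1 q.2)
    (hfinv_meas : Measurable fun q : 𝕏 × (Fin p → ℝ) => finv q.1 q.2)
    (ft ftinv : 𝕏 → (Fin p → ℝ) → (Fin p → ℝ))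
    (hft_linv : ∀ x, Function.LeftInverse (ftinv x) (ft x))
    (hft_rinv : ∀ x, Function.RightInverse (ftinv x) (ft x))
    (hft_tmi : ∀ x, IsTMI (ft x)) (hftinv_tmi : ∀ x, IsTMI (ftinv x))
    (hft_meas : Measurable fun q : 𝕏 × (Fin p → ℝ) => ft q.1 q.2)
    (hftinv_meas : Measurable fun q : 𝕏 × (Fin p → ℝ) => ftinv q.1 q.2)
    (hf_adapted : ∀ x x', (κ x').map (fun y => f x (finv x' y)) = κ x)
    (hft_adapted : ∀ x x', (κ x').map (fun y => ft x (ftinv x' y)) = κ x) :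
    ∀ x x', ∀ᵐ y ∂(κ x'), f x (finv x' y) = ft x (ftinv x' y) := by
  intro x x'
  -- section measurabilities
  have hfx : Measurable (f x) := hf_meas.comp measurable_prodMk_left
  have hfinvx' : Measurable (finv x') := hfinv_meas.comp measurable_prodMk_left
  have hftx : Measurable (ft x) := hft_meas.comp measurable_prodMk_left
  have hftx' : Measurable (ft x') := hft_meas.comp measurable_prodMk_left
  have hftinvx : Measurable (ftinv x) := hftinv_meas.comp measurable_prodMk_left
  have hftinvx' : Measurable (ftinv x') := hftinv_meas.comp measurable_prodMk_left
  set φ : (Fin p → ℝ) → (Fin p → ℝ) := fun z => f x (finv x' (ft x' (ftinv x z))) with hφdef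
  have hφmeas : Measurable φ := hfx.comp (hfinvx'.comp (hftx'.comp hftinvx))
  have htmiφ : IsTMI φ := (hf_tmi x).comp ((hfinv_tmi x').comp ((hft_tmi x').comp (hftinv_tmi x)))
  have hmapφ : (κ x).map φ = κ x := by
    have e1 : (κ x).map (fun z => ft x' (ftinv x z)) = κ x' := hft_adapted x' x
    have e2 : (κ x').map (fun y => f x (finv x' y)) = κ x := hf_adapted x x'
    calc (κ x).map φ
        = ((κ x).map (fun z => ft x' (ftinv x z))).map (fun y => f x (finv x' y)) :=
          (Measure.map_map (hfx.comp hfinvx') (hftx'.comp hftinvx)).symm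
      _ = (κ x').map (fun y => f x (finv x' y)) := by rw [e1]
      _ = κ x := e2
  have hfix : ∀ᵐ z ∂(κ x), φ z = z := tmi_fixed_ae (κ x) φ hφmeas htmiφ hmapφ
  have hs : MeasurableSet {z : Fin p → ℝ | φ z = z} := by
    have : {z : Fin p → ℝ | φ z = z} = ⋂ i, {z | φ z i = z i} := by
      ext z; simp [funext_iff]
    rw [this]
    exact MeasurableSet.iInter fun i =>
      measurableSet_eq_fun ((measurable_pi_apply i).comp hφmeas) (measurable_pi_apply i)
  have hht : Measurable (fun y => ft x (ftinv x' y)) := hftx.comp hftinvx'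
  have hmapht : (κ x').map (fun y => ft x (ftinv x' y)) = κ x := hft_adapted x x'
  rw [← hmapht] at hfix
  have hfix' : ∀ᵐ y ∂(κ x'), φ (ft x (ftinv x' y)) = ft x (ftinv x' y) :=
    (ae_map_iff hht.aemeasurable hs).1 hfix
  filter_upwards [hfix'] with y hy
  have e : φ (ft x (ftinv x' y)) = f x (finv x' y) := by
    show f x (finv x' (ft x' (ftinv x (ft x (ftinv x' y))))) = _
    rw [hft_linv x (ftinv x' y), hft_rinv x' y]
  rw [e] at hy
  exact hy
end

section
/- Let 𝕏 and 𝕐 be standard Borel spaces, 𝕐₀ a nonempty standard Borel space, and f : 𝕏 × 𝕐₀ → 𝕐 a Borel map such that f(x,·) : 𝕐₀ → 𝕐 is injective for every x ∈ 𝕏. Then there exists a Borel map f⁺ : 𝕏 × 𝕐 → 𝕐₀ such that f⁺(x, f(x, e)) = e for every x ∈ 𝕏 and every e ∈ 𝕐₀. -/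
open MeasureTheory

/-- **Measurable left inverse.** Let `𝕏`, `𝕐` be standard Borel spaces, `𝕐₀`
a nonempty standard Borel space, and `f : 𝕏 × 𝕐₀ → 𝕐` Borel with `f x` injective for every
`x`. Then there is a Borel map `f⁺ : 𝕏 × 𝕐 → 𝕐₀` with `f⁺ x (f x e) = e` for all `x, e`. -/
theorem measurable_left_inverse
    {𝕏 𝕐 𝕐₀ : Type*} [MeasurableSpace 𝕏] [MeasurableSpace 𝕐] [MeasurableSpace 𝕐₀]
    [StandardBorelSpace 𝕏] [StandardBorelSpace 𝕐] [StandardBorelSpace 𝕐₀]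
    [Nonempty 𝕐₀]
    (f : 𝕏 → 𝕐₀ → 𝕐) (hf : Measurable fun q : 𝕏 × 𝕐₀ => f q.1 q.2)
    (hinj : ∀ x, Function.Injective (f x)) :
    ∃ finv : 𝕏 → 𝕐 → 𝕐₀,
      (Measurable fun q : 𝕏 × 𝕐 => finv q.1 q.2) ∧
      ∀ x e, finv x (f x e) = e := by
  set g : 𝕏 × 𝕐₀ → 𝕏 × 𝕐 := fun q => (q.1, f q.1 q.2) with hg
  have hgm : Measurable g := measurable_fst.prodMk hf
  have hginj : Function.Injective g := by
    rintro ⟨x, e⟩ ⟨x', e'⟩ h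
    simp only [g, Prod.mk.injEq] at h
    obtain ⟨rfl, h2⟩ := h
    exact Prod.ext rfl (hinj x h2)
  have hemb : MeasurableEmbedding g := hgm.measurableEmbedding hginj
  obtain ⟨F, hFm, hF⟩ := hemb.exists_measurable_extend
    (measurable_snd : Measurable (Prod.snd : 𝕏 × 𝕐₀ → 𝕐₀)) (fun _ => ‹Nonempty 𝕐₀›)
  refine ⟨fun x y => F (x, y), hFm, fun x e => ?_⟩
  have := congrFun hF (x, e)
  simpa [g] using this
end

section
/- Assume ψ is characteristic: whenever two Borel probability measures P, Q on 𝕐 satisfy ∫ψ dP = ∫ψ dQ, then P = Q. Let 𝒯_𝔾 denote the set of cocycles T_f of 𝔾-valued coboundary maps f, and suppose some T⁰ ∈ 𝒯_𝔾 is κ-adapted, i.e. for every x, x' ∈ 𝕏 the pushforward of κ(x') under T⁰(x,x',·) equals κ(x). Then every minimizer T* of ℓ over 𝒯_𝔾 (i.e. T* ∈ 𝒯_𝔾 with ℓ(T*) ≤ ℓ(T) for all T ∈ 𝒯_𝔾) satisfies: T*(x,x,y) = y and T*(x'',x', T*(x',x,y)) = T*(x'',x,y) for all x, x', x'' ∈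 𝕏 and all y ∈ 𝕐, and for ν ⊗ ν-almost every (x, x') the pushforward of κ(x') under T*(x,x',·) equals κ(x). -/
open MeasureTheory ProbabilityTheory
open scoped InnerProductSpace

noncomputable section

variable {𝕏 𝕐 : Type*} [MeasurableSpace 𝕏] [MeasurableSpace 𝕐]

/-- The cocycle induced by a coboundary map `f`: `T_f (x, x', y) = f x ((f x')⁻¹ y)`. -/
def cocycleOf (f : 𝕏 → 𝕐 ≃ᵐ 𝕐) : 𝕏 → 𝕏 → 𝕐 → 𝕐 :=
  fun x x' y => f x ((f x').symm y)

/-- `f` is a `𝔾`-valued coboundary map: each `f x ∈ 𝔾`, and `(x,y) ↦ f x y`,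
`(x,y) ↦ (f x)⁻¹ y` are jointly measurable. -/
def IsCoboundaryMap (𝔾 : Set (𝕐 ≃ᵐ 𝕐)) (f : 𝕏 → 𝕐 ≃ᵐ 𝕐) : Prop :=
  (∀ x, f x ∈ 𝔾) ∧
  (Measurable fun q : 𝕏 × 𝕐 => f q.1 q.2) ∧
  (Measurable fun q : 𝕏 × 𝕐 => (f q.1).symm q.2)

variable {H : Type*} [NormedAddCommGroup H] [InnerProductSpace ℝ H]

/-- `g_T(x) := ∫ ψ(T(x, x', y')) dμ(x', y')` where `μ = ν ⊗ κ`. -/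
def gEmb (ν : Measure 𝕏) (κ : Kernel 𝕏 𝕐) (ψ : 𝕐 → H)
    (T : 𝕏 → 𝕏 → 𝕐 → 𝕐) (x : 𝕏) : H :=
  ∫ q, ψ (T x q.1 q.2) ∂(ν.compProd κ)

/-- Population CMMD loss `ℓ(T) := ∫ ‖ψ(y) − g_T(x)‖² dμ(x,y)` where `μ = ν ⊗ κ`. -/
def cmmdLoss (ν : Measure 𝕏) (κ : Kernel 𝕏 𝕐) (ψ : 𝕐 → H)
    (T : 𝕏 → 𝕏 → 𝕐 → 𝕐) : ℝ :=
  ∫ q, ‖ψ q.2 - gEmb ν κ ψ T q.1‖ ^ 2 ∂(ν.compProd κ)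

/-- A bounded a.e.-strongly measurable function is integrable w.r.t. a finite measure. -/
lemma integrable_of_bdd' {α E : Type*} [MeasurableSpace α] {μ : Measure α} [IsFiniteMeasure μ]
    [NormedAddCommGroup E] {g : α → E} (hg : AEStronglyMeasurable g μ) {C : ℝ}
    (hC : ∀ a, ‖g a‖ ≤ C) : Integrable g μ :=
  Integrable.mono' (integrable_const C) hg (Filter.Eventually.of_forall hC)

/-- **CMMD identifiability.** Assume `ψ` is characteristic, and some cocycle
of a `𝔾`-valued coboundary map is `κ`-adapted. Then every minimizer `T*` of `ℓ` over the
class `𝒯_𝔾` of cocycles of `𝔾`-valued coboundary maps satisfies the identity and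
path-independence properties everywhere, and for `ν ⊗ ν`-almost every `(x, x')` the
pushforward of `κ x'` under `T*(x, x', ·)` equals `κ x`. -/
theorem cmmd_identifiability
    [StandardBorelSpace 𝕏] [StandardBorelSpace 𝕐]
    (ν : Measure 𝕏) [IsProbabilityMeasure ν]
    (κ : Kernel 𝕏 𝕐) [IsMarkovKernel κ]
    [MeasurableSpace H] [BorelSpace H] [CompleteSpace H] [SecondCountableTopology H]
    (ψ : 𝕐 → H) (hψ : Measurable ψ) (C : ℝ) (hψ_bdd : ∀ y, ‖ψ y‖ ≤ C)
    (hchar : ∀ P Q : Measure 𝕐, IsProbabilityMeasure P → IsProbabilityMeasure Q →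
      (∫ y, ψ y ∂P) = (∫ y, ψ y ∂Q) → P = Q)
    (𝔾 : Set (𝕐 ≃ᵐ 𝕐))
    (hG_one : MeasurableEquiv.refl 𝕐 ∈ 𝔾)
    (hG_comp : ∀ g ∈ 𝔾, ∀ h ∈ 𝔾, g.trans h ∈ 𝔾)
    (hG_inv : ∀ g ∈ 𝔾, g.symm ∈ 𝔾)
    (f₀ : 𝕏 → 𝕐 ≃ᵐ 𝕐) (hf₀ : IsCoboundaryMap 𝔾 f₀)
    (hf₀_adapted : ∀ x x', (κ x').map (cocycleOf f₀ x x') = κ x)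
    (fstar : 𝕏 → 𝕐 ≃ᵐ 𝕐) (hfstar : IsCoboundaryMap 𝔾 fstar)
    (hmin : ∀ f : 𝕏 → 𝕐 ≃ᵐ 𝕐, IsCoboundaryMap 𝔾 f →
      cmmdLoss ν κ ψ (cocycleOf fstar) ≤ cmmdLoss ν κ ψ (cocycleOf f)) :
    (∀ x y, cocycleOf fstar x x y = y) ∧
    (∀ x x' x'' y,
      cocycleOf fstar x'' x' (cocycleOf fstar x' x y) = cocycleOf fstar x'' x y) ∧
    (∀ᵐ q ∂(ν.prod ν), (κ q.2).map (cocycleOf fstar q.1 q.2) = κ q.1) := by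
  classical
  refine ⟨fun x y => by simp [cocycleOf], fun x x' x'' y => by simp [cocycleOf], ?_⟩
  set C' : ℝ := max C 0 with hC'def
  have hC'0 : (0 : ℝ) ≤ C' := le_max_right _ _
  have hψb : ∀ y, ‖ψ y‖ ≤ C' := fun y => le_max_of_le_left (hψ_bdd y)
  have hψs : StronglyMeasurable ψ := hψ.stronglyMeasurable
  -- the conditional mean embedding of κ
  set m : 𝕏 → H := fun x => ∫ y, ψ y ∂κ x with hmdef
  have hm_sm : StronglyMeasurable m :=
    (hψs.comp_measurable (measurable_snd : Measurable fun p : 𝕏 × 𝕐 => p.2)).integral_kernel_prod_right'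
  have hm_bd : ∀ x, ‖m x‖ ≤ C' := by
    intro x
    calc ‖m x‖ ≤ C' * ((κ x) Set.univ).toReal :=
          norm_integral_le_of_norm_le_const (Filter.Eventually.of_forall hψb)
      _ = C' := by simp
  -- slice measurability for a coboundary map
  have slice_meas : ∀ (f : 𝕏 → 𝕐 ≃ᵐ 𝕐), IsCoboundaryMap 𝔾 f → ∀ x,
      Measurable (fun q : 𝕏 × 𝕐 => cocycleOf f x q.1 q.2) :=
    fun f hf x => (f x).measurable.comp hf.2.2
  -- the baseline candidate has g = m
  have hg0 : ∀ x, gEmb ν κ ψ (cocycleOf f₀) x = m x := by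
    intro x
    have hint : Integrable (fun q : 𝕏 × 𝕐 => ψ (cocycleOf f₀ x q.1 q.2)) (ν.compProd κ) :=
      integrable_of_bdd' ((hψ.comp (slice_meas f₀ hf₀ x)).aestronglyMeasurable)
        (fun q => hψb _)
    have h1 : gEmb ν κ ψ (cocycleOf f₀) x
        = ∫ x', ∫ y, ψ (cocycleOf f₀ x x' y) ∂κ x' ∂ν := by
      rw [gEmb, Measure.integral_compProd hint]
    rw [h1]
    have hin : ∀ x', ∫ y, ψ (cocycleOf f₀ x x' y) ∂κ x' = m x := by
      intro x'
      have hfun : cocycleOf f₀ x x' = ⇑((f₀ x').symm.trans (f₀ x)) := rfl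
      have h2 : ∫ y, ψ (cocycleOf f₀ x x' y) ∂κ x'
          = ∫ w, ψ w ∂((κ x').map ((f₀ x').symm.trans (f₀ x))) :=
        (integral_map_equiv ((f₀ x').symm.trans (f₀ x)) ψ).symm
      rw [h2, ← hfun, hf₀_adapted x x']
    simp_rw [hin]
    simp
  -- the pulled-back base measure for fstar
  set s : 𝕏 × 𝕐 → 𝕐 := fun q => (fstar q.1).symm q.2 with hsdef
  have hs_meas : Measurable s := hfstar.2.2
  set ρ : Measure 𝕐 := (ν.compProd κ).map s with hρdef
  haveI hρ_prob : IsProbabilityMeasure ρ := Measure.isProbabilityMeasure_map hs_meas.aemeasurable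
  set g : 𝕏 → H := gEmb ν κ ψ (cocycleOf fstar) with hgdef
  have hg_eq : ∀ x, g x = ∫ w, ψ w ∂(ρ.map (fstar x)) := by
    intro x
    rw [hgdef, hρdef, Measure.map_map (fstar x).measurable hs_meas,
      integral_map ((fstar x).measurable.comp hs_meas).aemeasurable hψs.aestronglyMeasurable]
    rfl
  have hg_sm : StronglyMeasurable g := by
    have hT_joint : Measurable (fun p : 𝕏 × (𝕏 × 𝕐) => cocycleOf fstar p.1 p.2.1 p.2.2) := by
      have h1 : Measurable (fun p : 𝕏 × (𝕏 × 𝕐) => ((p.1 : 𝕏), s p.2)) :=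
        measurable_fst.prodMk (hs_meas.comp measurable_snd)
      exact hfstar.2.1.comp h1
    exact (hψs.comp_measurable hT_joint).integral_prod_right'
  have hg_bd : ∀ x, ‖g x‖ ≤ C' := by
    intro x
    rw [hg_eq x]
    haveI : IsProbabilityMeasure (ρ.map (fstar x)) :=
      Measure.isProbabilityMeasure_map (fstar x).measurable.aemeasurable
    calc ‖∫ w, ψ w ∂(ρ.map (fstar x))‖ ≤ C' * ((ρ.map (fstar x)) Set.univ).toReal :=
          norm_integral_le_of_norm_le_const (Filter.Eventually.of_forall hψb)
      _ = C' := by simp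
  -- the loss formula
  have loss_formula : ∀ (G : 𝕏 → H), StronglyMeasurable G → (∀ x, ‖G x‖ ≤ C') →
      (∫ q, ‖ψ q.2 - G q.1‖ ^ 2 ∂(ν.compProd κ))
        = (∫ q, ‖ψ q.2‖ ^ 2 ∂(ν.compProd κ))
          - 2 * (∫ x, ⟪G x, m x⟫_ℝ ∂ν) + ∫ x, ‖G x‖ ^ 2 ∂ν := by
    intro G hG hGb
    have hGmeas : Measurable G := hG.measurable
    have hA : Integrable (fun q : 𝕏 × 𝕐 => ‖ψ q.2‖ ^ 2) (ν.compProd κ) := by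
      refine integrable_of_bdd' (C := C' ^ 2)
        (((hψ.comp measurable_snd).norm.pow_const 2).aestronglyMeasurable) (fun q => ?_)
      rw [Real.norm_eq_abs, abs_of_nonneg (by positivity)]
      exact pow_le_pow_left₀ (norm_nonneg _) (hψb _) 2
    have hB : Integrable (fun q : 𝕏 × 𝕐 => ⟪ψ q.2, G q.1⟫_ℝ) (ν.compProd κ) := by
      refine integrable_of_bdd' (C := C' * C')
        ((Measurable.inner (𝕜 := ℝ) (hψ.comp measurable_snd)
          (hGmeas.comp measurable_fst)).aestronglyMeasurable) (fun q => ?_)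
      calc ‖⟪ψ q.2, G q.1⟫_ℝ‖ ≤ ‖ψ q.2‖ * ‖G q.1‖ := norm_inner_le_norm _ _
        _ ≤ C' * C' := mul_le_mul (hψb _) (hGb _) (norm_nonneg _) hC'0
    have hD : Integrable (fun q : 𝕏 × 𝕐 => ‖G q.1‖ ^ 2) (ν.compProd κ) := by
      refine integrable_of_bdd' (C := C' ^ 2)
        (((hGmeas.comp measurable_fst).norm.pow_const 2).aestronglyMeasurable) (fun q => ?_)
      rw [Real.norm_eq_abs, abs_of_nonneg (by positivity)]
      exact pow_le_pow_left₀ (norm_nonneg _) (hGb _) 2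
    have expand : ∀ q : 𝕏 × 𝕐, ‖ψ q.2 - G q.1‖ ^ 2
        = ‖ψ q.2‖ ^ 2 - 2 * ⟪ψ q.2, G q.1⟫_ℝ + ‖G q.1‖ ^ 2 := fun q => norm_sub_sq_real _ _
    simp_rw [expand]
    have hAB : Integrable (fun q : 𝕏 × 𝕐 => ‖ψ q.2‖ ^ 2 - 2 * ⟪ψ q.2, G q.1⟫_ℝ) (ν.compProd κ) :=
      hA.sub (hB.const_mul 2)
    rw [integral_add hAB hD, integral_sub hA (hB.const_mul 2), integral_const_mul]
    have hBeq : (∫ q : 𝕏 × 𝕐, ⟪ψ q.2, G q.1⟫_ℝ ∂(ν.compProd κ)) = ∫ x, ⟪G x, m x⟫_ℝ ∂ν := by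
      rw [Measure.integral_compProd hB]
      refine integral_congr_ae (Filter.Eventually.of_forall fun x => ?_)
      have hint : Integrable ψ (κ x) := integrable_of_bdd' hψs.aestronglyMeasurable hψb
      calc (∫ y, ⟪ψ y, G x⟫_ℝ ∂κ x) = ∫ y, ⟪G x, ψ y⟫_ℝ ∂κ x :=
            integral_congr_ae (Filter.Eventually.of_forall fun y => real_inner_comm _ _)
        _ = ⟪G x, m x⟫_ℝ := integral_inner hint (G x)
    have hDeq : (∫ q : 𝕏 × 𝕐, ‖G q.1‖ ^ 2 ∂(ν.compProd κ)) = ∫ x, ‖G x‖ ^ 2 ∂ν := by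
      rw [Measure.integral_compProd hD]
      simp
    rw [hBeq, hDeq]
  -- losses of the two candidates
  have hloss_star : cmmdLoss ν κ ψ (cocycleOf fstar)
      = (∫ q, ‖ψ q.2‖ ^ 2 ∂(ν.compProd κ))
        - 2 * (∫ x, ⟪g x, m x⟫_ℝ ∂ν) + ∫ x, ‖g x‖ ^ 2 ∂ν := by
    rw [cmmdLoss, ← hgdef]
    exact loss_formula g hg_sm hg_bd
  have hloss0 : cmmdLoss ν κ ψ (cocycleOf f₀)
      = (∫ q, ‖ψ q.2‖ ^ 2 ∂(ν.compProd κ))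
        - 2 * (∫ x, ⟪m x, m x⟫_ℝ ∂ν) + ∫ x, ‖m x‖ ^ 2 ∂ν := by
    have h1 : cmmdLoss ν κ ψ (cocycleOf f₀)
        = ∫ q, ‖ψ q.2 - m q.1‖ ^ 2 ∂(ν.compProd κ) := by
      rw [cmmdLoss]
      exact integral_congr_ae (Filter.Eventually.of_forall fun q => by simp only [hg0])
    rw [h1]
    exact loss_formula m hm_sm hm_bd
  -- integrability over ν
  have hmmeas : Measurable m := hm_sm.measurable
  have hgmeas : Measurable g := hg_sm.measurable
  have hIg2 : Integrable (fun x => ‖g x‖ ^ 2) ν := by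
    refine integrable_of_bdd' (C := C' ^ 2) ((hgmeas.norm.pow_const 2).aestronglyMeasurable)
      (fun x => ?_)
    rw [Real.norm_eq_abs, abs_of_nonneg (by positivity)]
    exact pow_le_pow_left₀ (norm_nonneg _) (hg_bd _) 2
  have hIgm : Integrable (fun x => ⟪g x, m x⟫_ℝ) ν := by
    refine integrable_of_bdd' (C := C' * C')
      ((Measurable.inner (𝕜 := ℝ) hgmeas hmmeas).aestronglyMeasurable) (fun x => ?_)
    calc ‖⟪g x, m x⟫_ℝ‖ ≤ ‖g x‖ * ‖m x‖ := norm_inner_le_norm _ _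
      _ ≤ C' * C' := mul_le_mul (hg_bd _) (hm_bd _) (norm_nonneg _) hC'0
  have hIm2 : Integrable (fun x => ‖m x‖ ^ 2) ν := by
    refine integrable_of_bdd' (C := C' ^ 2) ((hmmeas.norm.pow_const 2).aestronglyMeasurable)
      (fun x => ?_)
    rw [Real.norm_eq_abs, abs_of_nonneg (by positivity)]
    exact pow_le_pow_left₀ (norm_nonneg _) (hm_bd _) 2
  -- from minimality: ∫ ‖g - m‖² ≤ 0
  have hmin' := hmin f₀ hf₀
  have hdiff : (∫ x, ‖g x - m x‖ ^ 2 ∂ν) ≤ 0 := by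
    have expand : ∀ x, ‖g x - m x‖ ^ 2
        = ‖g x‖ ^ 2 - 2 * ⟪g x, m x⟫_ℝ + ‖m x‖ ^ 2 := fun x => norm_sub_sq_real _ _
    have h1 : (∫ x, ‖g x - m x‖ ^ 2 ∂ν)
        = (∫ x, ‖g x‖ ^ 2 ∂ν) - 2 * (∫ x, ⟪g x, m x⟫_ℝ ∂ν) + ∫ x, ‖m x‖ ^ 2 ∂ν := by
      simp_rw [expand]
      have hAB : Integrable (fun x => ‖g x‖ ^ 2 - 2 * ⟪g x, m x⟫_ℝ) ν :=
        hIg2.sub (hIgm.const_mul 2)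
      rw [integral_add hAB hIm2, integral_sub hIg2 (hIgm.const_mul 2), integral_const_mul]
    have hmm : (∫ x, ⟪m x, m x⟫_ℝ ∂ν) = ∫ x, ‖m x‖ ^ 2 ∂ν :=
      integral_congr_ae (Filter.Eventually.of_forall fun x => real_inner_self_eq_norm_sq _)
    rw [hloss_star, hloss0, hmm] at hmin'
    rw [h1]
    linarith
  have hzero : ∀ᵐ x ∂ν, g x = m x := by
    have hnn : ∀ x, 0 ≤ ‖g x - m x‖ ^ 2 := fun x => by positivity
    have hI : Integrable (fun x => ‖g x - m x‖ ^ 2) ν := by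
      refine integrable_of_bdd' (C := (C' + C') ^ 2)
        (((hgmeas.sub hmmeas).norm.pow_const 2).aestronglyMeasurable) (fun x => ?_)
      rw [Real.norm_eq_abs, abs_of_nonneg (by positivity)]
      refine pow_le_pow_left₀ (norm_nonneg _) ?_ 2
      exact (norm_sub_le _ _).trans (add_le_add (hg_bd _) (hm_bd _))
    have h0 : (∫ x, ‖g x - m x‖ ^ 2 ∂ν) = 0 :=
      le_antisymm hdiff (integral_nonneg hnn)
    have := (integral_eq_zero_iff_of_nonneg hnn hI).mp h0
    filter_upwards [this] with x hx
    have hx' : ‖g x - m x‖ ^ 2 = 0 := hx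
    have : ‖g x - m x‖ = 0 := by
      exact pow_eq_zero_iff (two_ne_zero) |>.mp hx'
    exact sub_eq_zero.mp (norm_eq_zero.mp this)
  -- characteristic kernel: equality of measures ν-a.e.
  have hPae : ∀ᵐ x ∂ν, ρ.map (fstar x) = κ x := by
    filter_upwards [hzero] with x hx
    haveI : IsProbabilityMeasure (ρ.map (fstar x)) :=
      Measure.isProbabilityMeasure_map (fstar x).measurable.aemeasurable
    refine hchar _ _ this inferInstance ?_
    rw [← hg_eq x, hx, hmdef]
  rw [ae_iff] at hPae
  obtain ⟨N, hNsub, hNmeas, hNnull⟩ := exists_measurable_superset_of_null hPae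
  have key : ∀ x x' : 𝕏, x ∉ N → x' ∉ N →
      (κ x').map (cocycleOf fstar x x') = κ x := by
    intro x x' hx hx'
    have hPx : ρ.map (fstar x) = κ x := by
      by_contra h; exact hx (hNsub h)
    have hPx' : ρ.map (fstar x') = κ x' := by
      by_contra h; exact hx' (hNsub h)
    have hmeasT : Measurable (cocycleOf fstar x x') :=
      (fstar x).measurable.comp (fstar x').symm.measurable
    rw [← hPx', Measure.map_map hmeasT (fstar x').measurable, ← hPx]
    congr 1
    funext y
    simp [cocycleOf]
  rw [ae_iff]
  have hsub : {q : 𝕏 × 𝕏 | ¬ ((κ q.2).map (cocycleOf fstar q.1 q.2) = κ q.1)}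
      ⊆ (N ×ˢ Set.univ) ∪ (Set.univ ×ˢ N) := by
    intro q hq
    by_cases h1 : q.1 ∈ N
    · exact Or.inl ⟨h1, Set.mem_univ _⟩
    by_cases h2 : q.2 ∈ N
    · exact Or.inr ⟨Set.mem_univ _, h2⟩
    exact absurd (key q.1 q.2 h1 h2) hq
  refine measure_mono_null hsub (measure_union_null ?_ ?_) <;>
    · rw [Measure.prod_prod]
      simp [hNnull]

end
end

section
/- For any jointly Borel-measurable T : 𝕏 × 𝕏 × 𝕐 → 𝕐, the triple integral ∫∫∫ [ −2 k(y, T(x,x',y')) + k(T(x,x',y'), T(x,x'',y'')) ] dμ(x,y) dμ(x',y') dμ(x'',y'') equals ∫ ‖m(x) − g_T(x)‖²_H dν(x) − ∫ ‖m(x)‖²_H dν(x), and also equals ℓ(T) − ∫ ‖ψ(y)‖²_H dμ(x,y). In particular, it equals ℓ(T) plus a constant not depending on T. -/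
/-!
With `g = g_T(x)`, linearity of the Bochner integral collapses the two inner integrals to
`-2 ⟪ψ y, g⟫ + ‖g‖² = ‖ψ y - g‖² - ‖ψ y‖²`. Integrating over `μ` gives the identity with `ℓ(T)`,
whose correction term `∫ ‖ψ y‖² dμ` does not involve `T`. Disintegrating `μ = ν ⊗ κ` instead, the
integrand is affine in `ψ y`, so its `κ x`-average is obtained by replacing `ψ y` by `m(x)`.
-/

open MeasureTheory ProbabilityTheory RealInnerProductSpace

noncomputable section

variable {𝕏 𝕐 : Type*} [MeasurableSpace 𝕏] [MeasurableSpace 𝕐]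
variable {H : Type*} [NormedAddCommGroup H] [InnerProductSpace ℝ H]

/-- Kernel mean embedding `m(x) := ∫ ψ(y) dκ(x)(y)`. -/
def mEmb (κ : Kernel 𝕏 𝕐) (ψ : 𝕐 → H) (x : 𝕏) : H :=
  ∫ y, ψ y ∂(κ x)

/-- The triple integral
`∫∫∫ [−2 k(y, T(x,x',y')) + k(T(x,x',y'), T(x,x'',y''))] dμ dμ dμ`,
with `k(y, y') := ⟪ψ y, ψ y'⟫`. -/
def tripleCMMD (ν : Measure 𝕏) (κ : Kernel 𝕏 𝕐) (ψ : 𝕐 → H)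
    (T : 𝕏 → 𝕏 → 𝕐 → 𝕐) : ℝ :=
  ∫ z, (∫ z', (∫ z'',
      (-2 * ⟪ψ z.2, ψ (T z.1 z'.1 z'.2)⟫ +
        ⟪ψ (T z.1 z'.1 z'.2), ψ (T z.1 z''.1 z''.2)⟫)
    ∂(ν.compProd κ)) ∂(ν.compProd κ)) ∂(ν.compProd κ)

section Hilbert

variable {α : Type*} [MeasurableSpace α]

lemma norm_sub_sq_sub_norm_sq_real (a v : H) :
    ‖a - v‖ ^ 2 - ‖a‖ ^ 2 = -2 * ⟪a, v⟫ + ‖v‖ ^ 2 := by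
  rw [norm_sub_sq_real]
  ring

lemma integrable_norm_sq_of_norm_le {E : Type*} [NormedAddCommGroup E] {P : Measure α}
    [IsFiniteMeasure P] {f : α → E} (hf : AEStronglyMeasurable f P) {C : ℝ}
    (hC : ∀ a, ‖f a‖ ≤ C) : Integrable (fun a => ‖f a‖ ^ 2) P :=
  .of_bound (hf.norm.pow 2) (C ^ 2) <| ae_of_all _ fun a => by
    simpa using pow_le_pow_left₀ (norm_nonneg _) (hC a) 2

lemma integrable_norm_sq_comp_snd {β E : Type*} [MeasurableSpace β] [NormedAddCommGroup E]
    {μ : Measure (α × β)} [IsFiniteMeasure μ] {f : β → E} (hf : StronglyMeasurable f) {C : ℝ}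
    (hC : ∀ b, ‖f b‖ ≤ C) : Integrable (fun z : α × β => ‖f z.2‖ ^ 2) μ :=
  integrable_norm_sq_of_norm_le (hf.comp_measurable measurable_snd).aestronglyMeasurable
    fun z => hC z.2

lemma norm_integral_le_of_forall_norm_le {E : Type*} [NormedAddCommGroup E] [NormedSpace ℝ E]
    {P : Measure α} [IsProbabilityMeasure P] {f : α → E} {C : ℝ} (hC : ∀ a, ‖f a‖ ≤ C) :
    ‖∫ a, f a ∂P‖ ≤ C := by
  simpa using norm_integral_le_of_norm_le_const (μ := P) (ae_of_all _ hC)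

variable [CompleteSpace H] {P : Measure α} [IsProbabilityMeasure P] {f : α → H}

lemma integral_norm_sub_sq_sub_norm_sq (hf : Integrable f P) (v : H) :
    ∫ a, (‖f a - v‖ ^ 2 - ‖f a‖ ^ 2) ∂P = ‖∫ a, f a ∂P - v‖ ^ 2 - ‖∫ a, f a ∂P‖ ^ 2 := by
  simp_rw [norm_sub_sq_sub_norm_sq_real, real_inner_comm v]
  rw [integral_add ((hf.const_inner v).const_mul _) (integrable_const _), integral_const_mul,
    integral_inner hf, integral_const, probReal_univ, one_smul]

lemma integral_integral_neg_two_inner_add_inner (hf : Integrable f P) (a : H) :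
    ∫ z', ∫ z'', (-2 * ⟪a, f z'⟫ + ⟪f z', f z''⟫) ∂P ∂P
      = ‖a - ∫ z, f z ∂P‖ ^ 2 - ‖a‖ ^ 2 := by
  have h_inner : ∀ z', ∫ z'', (-2 * ⟪a, f z'⟫ + ⟪f z', f z''⟫) ∂P
      = -2 * ⟪a, f z'⟫ + ⟪∫ z, f z ∂P, f z'⟫ := fun z' => by
    rw [integral_add (integrable_const _) (hf.const_inner _), integral_const, probReal_univ,
      one_smul, integral_inner hf, real_inner_comm (∫ z, f z ∂P)]
  simp_rw [h_inner]
  rw [integral_add ((hf.const_inner a).const_mul _) (hf.const_inner _), integral_const_mul,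
    integral_inner hf, integral_inner hf, real_inner_self_eq_norm_sq,
    norm_sub_sq_sub_norm_sq_real]

end Hilbert

section CMMD

variable {ν : Measure 𝕏} {κ : Kernel 𝕏 𝕐} {ψ : 𝕐 → H} {C : ℝ} {T : 𝕏 → 𝕏 → 𝕐 → 𝕐}

lemma stronglyMeasurable_mEmb [IsSFiniteKernel κ] (hψ : StronglyMeasurable ψ) :
    StronglyMeasurable (mEmb κ ψ) :=
  (hψ.comp_measurable measurable_snd).integral_kernel_prod_right (f := fun _ y => ψ y)

lemma MeasureTheory.StronglyMeasurable.comp_uncurry_three {E : Type*} [TopologicalSpace E]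
    {φ : 𝕐 → E} (hφ : StronglyMeasurable φ)
    (hT : Measurable fun q : (𝕏 × 𝕏) × 𝕐 => T q.1.1 q.1.2 q.2) :
    StronglyMeasurable fun p : 𝕏 × (𝕏 × 𝕐) => φ (T p.1 p.2.1 p.2.2) :=
  hφ.comp_measurable <| hT.comp MeasurableEquiv.prodAssoc.symm.measurable

lemma stronglyMeasurable_gEmb (hψ : StronglyMeasurable ψ)
    (hT : Measurable fun q : (𝕏 × 𝕏) × 𝕐 => T q.1.1 q.1.2 q.2) :
    StronglyMeasurable (gEmb ν κ ψ T) :=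
  (hψ.comp_uncurry_three hT).integral_prod_right'

variable [IsProbabilityMeasure ν] [IsMarkovKernel κ]

lemma norm_gEmb_le (hψ_bdd : ∀ y, ‖ψ y‖ ≤ C) (x : 𝕏) : ‖gEmb ν κ ψ T x‖ ≤ C :=
  norm_integral_le_of_forall_norm_le fun _ => hψ_bdd _

lemma norm_mEmb_le (hψ_bdd : ∀ y, ‖ψ y‖ ≤ C) (x : 𝕏) : ‖mEmb κ ψ x‖ ≤ C :=
  norm_integral_le_of_forall_norm_le hψ_bdd

lemma integrable_norm_sub_gEmb_sq (hψ : StronglyMeasurable ψ) (hψ_bdd : ∀ y, ‖ψ y‖ ≤ C)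
    (hT : Measurable fun q : (𝕏 × 𝕏) × 𝕐 => T q.1.1 q.1.2 q.2) :
    Integrable (fun z => ‖ψ z.2 - gEmb ν κ ψ T z.1‖ ^ 2) (ν.compProd κ) :=
  integrable_norm_sq_of_norm_le
    ((hψ.comp_measurable measurable_snd).sub
      ((stronglyMeasurable_gEmb hψ hT).comp_measurable measurable_fst)).aestronglyMeasurable
    fun _ => (norm_sub_le _ _).trans (add_le_add (hψ_bdd _) (norm_gEmb_le hψ_bdd _))

variable [CompleteSpace H]

lemma tripleCMMD_eq_integral (hψ : StronglyMeasurable ψ) (hψ_bdd : ∀ y, ‖ψ y‖ ≤ C)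
    (hT : Measurable fun q : (𝕏 × 𝕏) × 𝕐 => T q.1.1 q.1.2 q.2) :
    tripleCMMD ν κ ψ T
      = ∫ z, (‖ψ z.2 - gEmb ν κ ψ T z.1‖ ^ 2 - ‖ψ z.2‖ ^ 2) ∂(ν.compProd κ) := by
  refine integral_congr_ae (ae_of_all _ fun z => ?_)
  refine integral_integral_neg_two_inner_add_inner
    (.of_bound ?_ C (ae_of_all _ fun _ => hψ_bdd _)) _
  exact ((hψ.comp_uncurry_three hT).comp_measurable measurable_prodMk_left).aestronglyMeasurable

lemma tripleCMMD_eq_cmmdLoss_sub (hψ : StronglyMeasurable ψ) (hψ_bdd : ∀ y, ‖ψ y‖ ≤ C)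
    (hT : Measurable fun q : (𝕏 × 𝕏) × 𝕐 => T q.1.1 q.1.2 q.2) :
    tripleCMMD ν κ ψ T = cmmdLoss ν κ ψ T - ∫ z, ‖ψ z.2‖ ^ 2 ∂(ν.compProd κ) := by
  rw [tripleCMMD_eq_integral hψ hψ_bdd hT,
    integral_sub (integrable_norm_sub_gEmb_sq hψ hψ_bdd hT) (integrable_norm_sq_comp_snd hψ hψ_bdd)]
  rfl

lemma tripleCMMD_eq_integral_norm_mEmb_sub_gEmb_sq_sub (hψ : StronglyMeasurable ψ)
    (hψ_bdd : ∀ y, ‖ψ y‖ ≤ C) (hT : Measurable fun q : (𝕏 × 𝕏) × 𝕐 => T q.1.1 q.1.2 q.2) :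
    tripleCMMD ν κ ψ T
      = (∫ x, ‖mEmb κ ψ x - gEmb ν κ ψ T x‖ ^ 2 ∂ν) - ∫ x, ‖mEmb κ ψ x‖ ^ 2 ∂ν := by
  have hψ_int : ∀ x, Integrable ψ (κ x) := fun _ =>
    .of_bound hψ.aestronglyMeasurable C (ae_of_all _ hψ_bdd)
  have hm := stronglyMeasurable_mEmb (κ := κ) hψ
  have hg := stronglyMeasurable_gEmb (ν := ν) (κ := κ) hψ hT
  calc tripleCMMD ν κ ψ T
      = ∫ z, (‖ψ z.2 - gEmb ν κ ψ T z.1‖ ^ 2 - ‖ψ z.2‖ ^ 2) ∂(ν.compProd κ) :=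
        tripleCMMD_eq_integral hψ hψ_bdd hT
    _ = ∫ x, ∫ y, (‖ψ y - gEmb ν κ ψ T x‖ ^ 2 - ‖ψ y‖ ^ 2) ∂(κ x) ∂ν :=
        Measure.integral_compProd <| (integrable_norm_sub_gEmb_sq hψ hψ_bdd hT).sub
          (integrable_norm_sq_comp_snd hψ hψ_bdd)
    _ = ∫ x, (‖mEmb κ ψ x - gEmb ν κ ψ T x‖ ^ 2 - ‖mEmb κ ψ x‖ ^ 2) ∂ν :=
        integral_congr_ae <| ae_of_all _ fun x => integral_norm_sub_sq_sub_norm_sq (hψ_int x) _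
    _ = _ := integral_sub
        (integrable_norm_sq_of_norm_le (hm.sub hg).aestronglyMeasurable fun x =>
          (norm_sub_le _ _).trans (add_le_add (norm_mEmb_le hψ_bdd x) (norm_gEmb_le hψ_bdd x)))
        (integrable_norm_sq_of_norm_le hm.aestronglyMeasurable (norm_mEmb_le hψ_bdd))

end CMMD

theorem tripleCMMD_eq_general
    (ν : Measure 𝕏) [IsProbabilityMeasure ν]
    (κ : Kernel 𝕏 𝕐) [IsMarkovKernel κ]
    [MeasurableSpace H] [BorelSpace H] [CompleteSpace H] [SecondCountableTopology H]
    (ψ : 𝕐 → H) (hψ : Measurable ψ) (C : ℝ) (hψ_bdd : ∀ y, ‖ψ y‖ ≤ C)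
    (T : 𝕏 → 𝕏 → 𝕐 → 𝕐)
    (hT : Measurable fun q : (𝕏 × 𝕏) × 𝕐 => T q.1.1 q.1.2 q.2) :
    tripleCMMD ν κ ψ T
      = (∫ x, ‖mEmb κ ψ x - gEmb ν κ ψ T x‖ ^ 2 ∂ν) - ∫ x, ‖mEmb κ ψ x‖ ^ 2 ∂ν ∧
    tripleCMMD ν κ ψ T
      = cmmdLoss ν κ ψ T - ∫ z, ‖ψ z.2‖ ^ 2 ∂(ν.compProd κ) ∧
    ∃ c : ℝ, ∀ T' : 𝕏 → 𝕏 → 𝕐 → 𝕐,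
      (Measurable fun q : (𝕏 × 𝕏) × 𝕐 => T' q.1.1 q.1.2 q.2) →
      tripleCMMD ν κ ψ T' = cmmdLoss ν κ ψ T' + c := by
  have hψ' := hψ.stronglyMeasurable
  refine ⟨tripleCMMD_eq_integral_norm_mEmb_sub_gEmb_sq_sub hψ' hψ_bdd hT,
    tripleCMMD_eq_cmmdLoss_sub hψ' hψ_bdd hT, -∫ z, ‖ψ z.2‖ ^ 2 ∂(ν.compProd κ),
    fun T' hT' => ?_⟩
  rw [tripleCMMD_eq_cmmdLoss_sub hψ' hψ_bdd hT', sub_eq_add_neg]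

/-- For any jointly measurable `T`, the triple CMMD integral equals
`∫ ‖m(x) − g_T(x)‖² dν − ∫ ‖m(x)‖² dν`, and also equals `ℓ(T) − ∫ ‖ψ(y)‖² dμ(x,y)`;
in particular it equals `ℓ(T)` plus a constant not depending on `T`. -/
theorem tripleCMMD_eq
    [StandardBorelSpace 𝕏] [StandardBorelSpace 𝕐]
    (ν : Measure 𝕏) [IsProbabilityMeasure ν]
    (κ : Kernel 𝕏 𝕐) [IsMarkovKernel κ]
    [MeasurableSpace H] [BorelSpace H] [CompleteSpace H] [SecondCountableTopology H]
    (ψ : 𝕐 → H) (hψ : Measurable ψ) (C : ℝ) (hψ_bdd : ∀ y, ‖ψ y‖ ≤ C)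
    (T : 𝕏 → 𝕏 → 𝕐 → 𝕐)
    (hT : Measurable fun q : (𝕏 × 𝕏) × 𝕐 => T q.1.1 q.1.2 q.2) :
    tripleCMMD ν κ ψ T
      = (∫ x, ‖mEmb κ ψ x - gEmb ν κ ψ T x‖ ^ 2 ∂ν) - ∫ x, ‖mEmb κ ψ x‖ ^ 2 ∂ν ∧
    tripleCMMD ν κ ψ T
      = cmmdLoss ν κ ψ T - ∫ z, ‖ψ z.2‖ ^ 2 ∂(ν.compProd κ) ∧
    ∃ c : ℝ, ∀ T' : 𝕏 → 𝕏 → 𝕐 → 𝕐,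
      (Measurable fun q : (𝕏 × 𝕏) × 𝕐 => T' q.1.1 q.1.2 q.2) →
      tripleCMMD ν κ ψ T' = cmmdLoss ν κ ψ T' + c :=
  tripleCMMD_eq_general ν κ ψ hψ C hψ_bdd T hT
end
end
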